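/- arXiv:2006.07423 — 4 statements merged into one kernel-verified Lean document; each statement's English description precedes it below -/
import Mathlib

section
/- For n ≥ 0 define the generating polynomial G_n(x) = Σ_{j=0}^{q−2} ε_j(u_n) x^j ∈ ℤ[x], where ε_j(u_n) = card{ m : 0 ≤ m ≤ n, F_m(u_n) ≡ ℘^j mod 𝔪 }. For 0 ≤ j ≤ q−1 let e_j(n) be the number of base-q digits of n equal to j (with e_0(0) = 1 and e_j(0) = 0 for j ≥ 1). Then G_n(x) ≡ Π_{j=0}^{q−1} G_j(x)^{e_j(n)} (mod x^{q−1} − 1). (Analogue of the Garfield–Wilf theorem.) -/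
set_option linter.unusedSectionVars false
set_option linter.unusedVariables false
set_option maxHeartbeats 1000000


open Finset IsLocalRing

section GW

theorem gw_prod_split {M : Type*} [CommMonoid M] (f : ℕ → M) (q s r : ℕ) :
    ∏ k ∈ range (q * s + r), f k =
      (∏ j ∈ range s, ∏ i ∈ range q, f (q * j + i)) * ∏ i ∈ range r, f (q * s + i) := by
  rw [Finset.prod_range_add]
  congr 1
  induction s with
  | zero => simp
  | succ s ih =>
      rw [Nat.mul_succ, Finset.prod_range_add, ih, Finset.prod_range_succ]

variable {V : Type*} [CommRing V] [IsDomain V] [IsDiscreteValuationRing V]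

theorem gw_u_split {q : ℕ} (hq : 2 ≤ q) {π : V} {u : ℕ → V} (hu0 : u 0 = 0)
    (hudig : ∀ n : ℕ, u n = ∑ i ∈ Finset.range (Nat.digits q n).length,
        u ((Nat.digits q n).getD i 0) * π ^ i) (n : ℕ) :
    u n = u (n % q) + π * u (n / q) := by
  rcases Nat.eq_zero_or_pos n with h | h
  · subst h; simp [hu0]
  · have hd : Nat.digits q n = n % q :: Nat.digits q (n / q) := Nat.digits_def' (by omega) h
    rw [hudig n, hd]
    simp only [List.length_cons]
    rw [Finset.sum_range_succ']
    simp only [List.getD_cons_succ, List.getD_cons_zero, pow_zero, mul_one, pow_succ]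
    rw [add_comm, hudig (n / q), Finset.mul_sum]
    congr 1
    refine Finset.sum_congr rfl fun i _ => by ring

theorem gw_units {q : ℕ} {u : ℕ → V}
    (hurep : ∀ a : V, ∃! i : ℕ, i < q ∧ a - u i ∈ maximalIdeal V)
    {i j : ℕ} (hi : i < q) (hj : j < q) (hij : i ≠ j) :
    u i - u j ∉ maximalIdeal V := by
  intro hmem
  obtain ⟨k, -, huniq⟩ := hurep (u i)
  have h1 : i = k := huniq i ⟨hi, by simp⟩
  have h2 : j = k := huniq j ⟨hj, hmem⟩
  exact hij (h1.trans h2.symm)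

theorem gw_u_inj {q : ℕ} (hq : 2 ≤ q) {π : V} (hπ : Irreducible π) {u : ℕ → V} (hu0 : u 0 = 0)
    (hurep : ∀ a : V, ∃! i : ℕ, i < q ∧ a - u i ∈ maximalIdeal V)
    (hudig : ∀ n : ℕ, u n = ∑ i ∈ Finset.range (Nat.digits q n).length,
        u ((Nat.digits q n).getD i 0) * π ^ i) :
    Function.Injective u := by
  have hsplit := gw_u_split hq hu0 hudig
  have hπm : π ∈ maximalIdeal V := hπ.not_isUnit
  suffices h : ∀ s a b, a + b ≤ s → u a = u b → a = b by
    intro a b hab; exact h (a + b) a b le_rfl hab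
  intro s
  induction s with
  | zero => intro a b h _; omega
  | succ s ih =>
      intro a b hs hab
      have h0 : a % q = b % q := by
        by_contra hne
        refine gw_units hurep (Nat.mod_lt _ (by omega)) (Nat.mod_lt _ (by omega)) hne ?_
        have : u (a % q) - u (b % q) = π * (u (b / q) - u (a / q)) := by
          have ha := hsplit a; have hb := hsplit b
          rw [ha, hb] at hab
          linear_combination hab
        rw [this]
        exact Ideal.mul_mem_right _ _ hπm
      have h1 : u (a / q) = u (b / q) := by
        have ha := hsplit a; have hb := hsplit b
        rw [ha, hb, h0] at hab
        have := add_left_cancel hab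
        exact mul_left_cancel₀ hπ.ne_zero this
      have hda : a / q ≤ a / 2 := Nat.div_le_div_left hq (by norm_num)
      have hdb : b / q ≤ b / 2 := Nat.div_le_div_left hq (by norm_num)
      have h2 : a / q = b / q := ih (a / q) (b / q) (by omega) h1
      calc a = a % q + q * (a / q) := (Nat.mod_add_div a q).symm
        _ = b % q + q * (b / q) := by rw [h0, h2]
        _ = b := Nat.mod_add_div b q

end GW

open Finset IsLocalRing

section GW2

variable {V : Type*} [CommRing V] [IsDomain V] [IsDiscreteValuationRing V]

theorem gw_res_ne {q : ℕ} {u : ℕ → V}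
    (hurep : ∀ a : V, ∃! i : ℕ, i < q ∧ a - u i ∈ maximalIdeal V)
    {i j : ℕ} (hi : i < q) (hj : j < q) (hij : i ≠ j) :
    residue V (u i) ≠ residue V (u j) := by
  intro h
  have hmem : u i - u j ∈ maximalIdeal V := by
    rw [← residue_eq_zero_iff, map_sub, h, sub_self]
  obtain ⟨k, -, huniq⟩ := hurep (u i)
  have h1 : i = k := huniq i ⟨hi, by simp⟩
  have h2 : j = k := huniq j ⟨hj, hmem⟩
  exact hij (h1.trans h2.symm)

theorem gw_omega_ne {q : ℕ} {u : ℕ → V}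
    (hurep : ∀ a : V, ∃! i : ℕ, i < q ∧ a - u i ∈ maximalIdeal V)
    {c : ℕ} (hc : c < q) :
    (∏ i ∈ (range q).erase c, (residue V (u c) - residue V (u i))) ≠ 0 := by
  refine Finset.prod_ne_zero_iff.mpr fun i hi => sub_ne_zero.mpr ?_
  rw [Finset.mem_erase, Finset.mem_range] at hi
  exact gw_res_ne hurep hc hi.2 (Ne.symm hi.1)

theorem gw_omega_eq {q : ℕ} {u : ℕ → V}
    (hurep : ∀ a : V, ∃! i : ℕ, i < q ∧ a - u i ∈ maximalIdeal V)
    {c d : ℕ} (hc : c < q) (hd : d < q) :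
    (∏ i ∈ (range q).erase c, (residue V (u c) - residue V (u i))) =
      ∏ i ∈ (range q).erase d, (residue V (u d) - residue V (u i)) := by
  classical
  have hsurj : ∀ x : ResidueField V, ∃ i, i < q ∧ residue V (u i) = x := by
    intro x
    obtain ⟨v, rfl⟩ := residue_surjective (R := V) x
    obtain ⟨i, ⟨hi, hmem⟩, -⟩ := hurep v
    refine ⟨i, hi, ?_⟩
    have h0 : residue V (v - u i) = 0 := (residue_eq_zero_iff _).mpr hmem
    rw [map_sub, sub_eq_zero] at h0
    exact h0.symm
  have hfin : Finite (ResidueField V) :=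
    Finite.of_surjective (fun i : Fin q => residue V (u i))
      (fun x => by obtain ⟨i, hi, h⟩ := hsurj x; exact ⟨⟨i, hi⟩, h⟩)
  letI : Fintype (ResidueField V) := Fintype.ofFinite _
  have himg : ∀ c : ℕ, c < q →
      ((range q).erase c).image (fun i => residue V (u c) - residue V (u i)) =
        Finset.univ.erase (0 : ResidueField V) := by
    intro c hc
    ext x
    simp only [mem_image, mem_erase, mem_range, mem_univ, and_true]
    constructor
    · rintro ⟨i, ⟨hic, hiq⟩, rfl⟩
      exact sub_ne_zero.mpr (gw_res_ne hurep hc hiq (Ne.symm hic))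
    · intro hx
      obtain ⟨i, hiq, hAi⟩ := hsurj (residue V (u c) - x)
      refine ⟨i, ⟨fun h => hx ?_, hiq⟩, by rw [hAi]; ring⟩
      subst h
      have : x = 0 := by linear_combination hAi
      exact this
  have key : ∀ c : ℕ, c < q →
      (∏ i ∈ (range q).erase c, (residue V (u c) - residue V (u i))) =
        ∏ x ∈ Finset.univ.erase (0 : ResidueField V), x := by
    intro c hc
    rw [← himg c hc]
    rw [Finset.prod_image]
    intro i hi j hj hij
    rw [Finset.mem_coe, Finset.mem_erase, Finset.mem_range] at hi hj
    have h2 : residue V (u i) = residue V (u j) := by linear_combination -hij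
    by_contra hne
    exact gw_res_ne hurep hi.2 hj.2 hne h2
  rw [key c hc, key d hd]

end GW2

open Finset IsLocalRing

section GW3

variable {V : Type*} [CommRing V] [IsDomain V] [IsDiscreteValuationRing V]

theorem gw_lucas {q : ℕ} (hq : 2 ≤ q) {π : V} (hπ : Irreducible π) {u : ℕ → V} (hu0 : u 0 = 0)
    (hurep : ∀ a : V, ∃! i : ℕ, i < q ∧ a - u i ∈ maximalIdeal V)
    (hudig : ∀ n : ℕ, u n = ∑ i ∈ Finset.range (Nat.digits q n).length,
        u ((Nat.digits q n).getD i 0) * π ^ i)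
    {F : ℕ → V → V}
    (hF : ∀ (n : ℕ) (x : V),
        (∏ k ∈ Finset.range n, (u n - u k)) * F n x = ∏ k ∈ Finset.range n, (x - u k))
    (n m : ℕ) :
    residue V (F m (u n)) =
      residue V (F (m % q) (u (n % q))) * residue V (F (m / q) (u (n / q))) := by
  have hq0 : 0 < q := by omega
  have hsplit := gw_u_split hq hu0 hudig
  have huinj := gw_u_inj hq hπ hu0 hurep hudig
  have hρπ : residue V π = 0 := (residue_eq_zero_iff _).mpr hπ.not_isUnit
  have hDne : ∀ t : ℕ, (∏ k ∈ range t, (u t - u k)) ≠ 0 := by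
    intro t
    refine Finset.prod_ne_zero_iff.mpr fun k hk => sub_ne_zero.mpr fun h => ?_
    rw [mem_range] at hk
    exact absurd (huinj h) (by omega)
  have hfac : ∀ N j i : ℕ, i < q → u N - u (q * j + i)
      = (u (N % q) - u i) + π * (u (N / q) - u j) := by
    intro N j i hi
    rw [hsplit N, hsplit (q * j + i), Nat.mul_add_mod, Nat.mul_add_div hq0,
      Nat.mod_eq_of_lt hi, Nat.div_eq_of_lt hi, add_zero]
    ring
  have hN : ∀ N M : ℕ, (∏ k ∈ range M, (u N - u k)) =
      π ^ (M / q) * (∏ j ∈ range (M / q), (u (N / q) - u j)) *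
        (∏ j ∈ range (M / q), ∏ i ∈ (range q).erase (N % q),
            ((u (N % q) - u i) + π * (u (N / q) - u j))) *
        ∏ i ∈ range (M % q), ((u (N % q) - u i) + π * (u (N / q) - u (M / q))) := by
    intro N M
    conv_lhs => rw [← Nat.div_add_mod M q]
    rw [gw_prod_split (fun k => u N - u k) q (M / q) (M % q)]
    have h1 : ∀ j ∈ range (M / q), (∏ i ∈ range q, (u N - u (q * j + i)))
        = (π * (u (N / q) - u j)) * ∏ i ∈ (range q).erase (N % q),
            ((u (N % q) - u i) + π * (u (N / q) - u j)) := by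
      intro j _
      rw [Finset.prod_congr rfl fun i hi => hfac N j i (mem_range.mp hi),
        ← Finset.mul_prod_erase (range q) _ (mem_range.mpr (Nat.mod_lt N hq0)),
        sub_self, zero_add]
    rw [Finset.prod_congr rfl h1, Finset.prod_mul_distrib, Finset.prod_mul_distrib,
      Finset.prod_const, Finset.card_range,
      Finset.prod_congr rfl fun i hi => hfac N (M / q) i
        (lt_trans (mem_range.mp hi) (Nat.mod_lt M hq0))]
  have hm0q : m % q < q := Nat.mod_lt m hq0
  have hn0q : n % q < q := Nat.mod_lt n hq0
  have e1 : (π ^ (m / q) * (∏ j ∈ range (m / q), (u (m / q) - u j))) *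
      ((∏ j ∈ range (m / q), ∏ i ∈ (range q).erase (m % q),
          ((u (m % q) - u i) + π * (u (m / q) - u j))) *
        (∏ i ∈ range (m % q), ((u (m % q) - u i) + π * (u (m / q) - u (m / q)))) *
        F m (u n)) =
      (π ^ (m / q) * (∏ j ∈ range (m / q), (u (m / q) - u j))) *
      (F (m / q) (u (n / q)) *
        (∏ j ∈ range (m / q), ∏ i ∈ (range q).erase (n % q),
            ((u (n % q) - u i) + π * (u (n / q) - u j))) *
        ∏ i ∈ range (m % q), ((u (n % q) - u i) + π * (u (n / q) - u (m / q)))) := by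
    calc (π ^ (m / q) * (∏ j ∈ range (m / q), (u (m / q) - u j))) *
        ((∏ j ∈ range (m / q), ∏ i ∈ (range q).erase (m % q),
            ((u (m % q) - u i) + π * (u (m / q) - u j))) *
          (∏ i ∈ range (m % q), ((u (m % q) - u i) + π * (u (m / q) - u (m / q)))) *
          F m (u n))
        = (∏ k ∈ range m, (u m - u k)) * F m (u n) := by rw [hN m m]; ring
      _ = ∏ k ∈ range m, (u n - u k) := hF m (u n)
      _ = _ := by rw [hN n m, ← hF (m / q) (u (n / q))]; ring
  have e2 := mul_left_cancel₀
    (mul_ne_zero (pow_ne_zero (m / q) hπ.ne_zero) (hDne (m / q))) e1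
  have e3 := congrArg (residue V) e2
  simp only [map_mul, map_prod, map_add, map_sub, hρπ, zero_mul, add_zero,
    Finset.prod_const, Finset.card_range] at e3
  rcases le_or_gt (m % q) (n % q) with hle | hlt
  · -- good case
    have hQ := congrArg (residue V) (hF (m % q) (u (n % q)))
    simp only [map_mul, map_prod, map_sub] at hQ
    have hP : (∏ i ∈ range (m % q), (residue V (u (m % q)) - residue V (u i))) ≠ 0 := by
      refine Finset.prod_ne_zero_iff.mpr fun i hi => sub_ne_zero.mpr ?_
      rw [mem_range] at hi
      exact gw_res_ne hurep hm0q (lt_trans hi hm0q) (by omega)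
    have hωne := gw_omega_ne hurep hn0q
    rw [gw_omega_eq hurep hm0q hn0q] at e3
    refine mul_left_cancel₀ (mul_ne_zero (pow_ne_zero (m / q) hωne) hP) ?_
    linear_combination e3 - (residue V (F (m / q) (u (n / q))) *
      (∏ i ∈ (range q).erase (n % q), (residue V (u (n % q)) - residue V (u i))) ^ (m / q)) * hQ
  · -- bad case
    have hT0 : (∏ i ∈ range (m % q), (residue V (u (n % q)) - residue V (u i))) = 0 :=
      Finset.prod_eq_zero (mem_range.mpr hlt) (sub_self _)
    have hF0zero : F (m % q) (u (n % q)) = 0 := by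
      have h2 := hF (m % q) (u (n % q))
      have hz : (∏ k ∈ range (m % q), (u (n % q) - u k)) = 0 :=
        Finset.prod_eq_zero (mem_range.mpr hlt) (sub_self (u (n % q)))
      rw [hz] at h2
      exact (mul_eq_zero.mp h2).resolve_left (hDne (m % q))
    rw [hF0zero, map_zero, zero_mul]
    have hP : (∏ i ∈ range (m % q), (residue V (u (m % q)) - residue V (u i))) ≠ 0 := by
      refine Finset.prod_ne_zero_iff.mpr fun i hi => sub_ne_zero.mpr ?_
      rw [mem_range] at hi
      exact gw_res_ne hurep hm0q (lt_trans hi hm0q) (by omega)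
    have hωmne := gw_omega_ne hurep hm0q
    rw [hT0, mul_zero] at e3
    exact (mul_eq_zero.mp e3).resolve_left (mul_ne_zero (pow_ne_zero _ hωmne) hP)

end GW3

open Finset IsLocalRing

section GW4

variable {V : Type*} [CommRing V] [IsDomain V] [IsDiscreteValuationRing V]

theorem gw_g_facts {q : ℕ} (hq : 2 ≤ q) {u : ℕ → V}
    (hurep : ∀ a : V, ∃! i : ℕ, i < q ∧ a - u i ∈ maximalIdeal V)
    {g : V} (hg : g ∉ maximalIdeal V)
    (hgen : ∀ a : V, a ∉ maximalIdeal V →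
        ∃ j : ℕ, residue V a = residue V g ^ j) :
    (residue V g) ^ (q - 1) = 1 ∧
      ∀ j1 j2 : ℕ, j1 < q - 1 → j2 < q - 1 →
        (residue V g) ^ j1 = (residue V g) ^ j2 → j1 = j2 := by
  classical
  have hsurj : ∀ x : ResidueField V, ∃ i, i < q ∧ residue V (u i) = x := by
    intro x
    obtain ⟨v, rfl⟩ := residue_surjective (R := V) x
    obtain ⟨i, ⟨hi, hmem⟩, -⟩ := hurep v
    refine ⟨i, hi, ?_⟩
    have h0 : residue V (v - u i) = 0 := (residue_eq_zero_iff _).mpr hmem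
    rw [map_sub, sub_eq_zero] at h0
    exact h0.symm
  have hinj : ∀ i j : ℕ, i < q → j < q → residue V (u i) = residue V (u j) → i = j := by
    intro i j hi hj hij
    by_contra hne
    have hmem : u i - u j ∈ maximalIdeal V := by
      rw [← residue_eq_zero_iff, map_sub, hij, sub_self]
    obtain ⟨k, -, huniq⟩ := hurep (u i)
    exact hne ((huniq i ⟨hi, by simp⟩).trans (huniq j ⟨hj, hmem⟩).symm)
  have hbij : Function.Bijective (fun i : Fin q => residue V (u i)) := by
    constructor
    · intro i j hij
      exact Fin.ext (hinj i j i.2 j.2 hij)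
    · intro x
      obtain ⟨i, hi, h⟩ := hsurj x
      exact ⟨⟨i, hi⟩, h⟩
  have hfin : Finite (ResidueField V) := Finite.of_surjective _ hbij.2
  have hcard : Nat.card (ResidueField V) = q := by
    rw [← Nat.card_congr (Equiv.ofBijective _ hbij), Nat.card_eq_fintype_card, Fintype.card_fin]
  have hg0 : residue V g ≠ 0 := fun h => hg ((residue_eq_zero_iff g).mp h)
  set gu : (ResidueField V)ˣ := Units.mk0 _ hg0 with hgu
  have hmem : ∀ x : (ResidueField V)ˣ, x ∈ Subgroup.zpowers gu := by
    intro x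
    obtain ⟨v, hv⟩ := residue_surjective (R := V) (x : ResidueField V)
    have hvm : v ∉ maximalIdeal V := by
      intro hm
      exact x.ne_zero (by rw [← hv, residue_eq_zero_iff]; exact hm)
    obtain ⟨j, hj⟩ := hgen v hvm
    refine ⟨(j : ℤ), Units.ext ?_⟩
    rw [Units.val_zpow_eq_zpow_val, hgu, Units.val_mk0, zpow_natCast, ← hj, hv]
  have hord : orderOf gu = q - 1 := by
    rw [orderOf_eq_card_of_forall_mem_zpowers hmem, Nat.card_units, hcard]
  constructor
  · have h1 := pow_orderOf_eq_one gu
    rw [hord] at h1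
    have := congrArg (Units.val) h1
    simpa [hgu] using this
  · intro j1 j2 h1 h2 heq
    have : gu ^ j1 = gu ^ j2 := by
      ext
      simpa [hgu] using heq
    exact pow_injOn_Iio_orderOf (by rw [hord]; exact h1) (by rw [hord]; exact h2) this

end GW4

open Finset IsLocalRing Polynomial




/-- Analogue of the Garfield–Wilf theorem: with
`G n = Σ_{j=0}^{q-2} ε_j(u_n) x^j ∈ ℤ[x]` where
`ε_j(u_n) = card{ m : 0 ≤ m ≤ n, F m (u n) ≡ g^j mod 𝔪 }`, and `e j n` the number of
base-`q` digits of `n` equal to `j` (with `e 0 0 = 1` and `e j 0 = 0` for `j ≥ 1`),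
one has `G n ≡ Π_{j=0}^{q-1} (G j) ^ (e j n) (mod x^(q-1) - 1)`. -/
theorem garfield_wilf_analogue
    (V : Type*) [CommRing V] [IsDomain V] [IsDiscreteValuationRing V]
    (q : ℕ) (hq : 2 ≤ q)
    (π : V) (hπ : Irreducible π)
    (hmax : IsLocalRing.maximalIdeal V = Ideal.span {π})
    (u : ℕ → V) (hu0 : u 0 = 0)
    (hurep : ∀ a : V, ∃! i : ℕ, i < q ∧ a - u i ∈ IsLocalRing.maximalIdeal V)
    (hudig : ∀ n : ℕ, u n = ∑ i ∈ Finset.range (Nat.digits q n).length,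
        u ((Nat.digits q n).getD i 0) * π ^ i)
    (F : ℕ → V → V) (hF0 : ∀ x : V, F 0 x = 1)
    (hF : ∀ (n : ℕ) (x : V),
        (∏ k ∈ Finset.range n, (u n - u k)) * F n x = ∏ k ∈ Finset.range n, (x - u k))
    (g : V) (hg : g ∉ IsLocalRing.maximalIdeal V)
    (hgen : ∀ a : V, a ∉ IsLocalRing.maximalIdeal V →
        ∃ j : ℕ, IsLocalRing.residue V a = IsLocalRing.residue V g ^ j)
    (G : ℕ → Polynomial ℤ)
    (hG : ∀ n : ℕ, G n = ∑ j ∈ Finset.range (q - 1),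
        Polynomial.C ((Nat.card {m : ℕ | m ≤ n ∧
            IsLocalRing.residue V (F m (u n)) = IsLocalRing.residue V g ^ (j : ℤ)} : ℤ)) *
          Polynomial.X ^ j)
    (e : ℕ → ℕ → ℕ) (he00 : e 0 0 = 1) (he0 : ∀ j : ℕ, 1 ≤ j → e j 0 = 0)
    (he : ∀ j n : ℕ, 0 < n → e j n = (Nat.digits q n).count j)
    (n : ℕ) :
    G n - ∏ j ∈ Finset.range q, (G j) ^ (e j n) ∈
      Ideal.span {(Polynomial.X : Polynomial ℤ) ^ (q - 1) - 1} := by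
  classical
  have hq0 : 0 < q := by omega
  have hq1 : 0 < q - 1 := by omega
  set I : Ideal (Polynomial ℤ) := Ideal.span {(Polynomial.X : Polynomial ℤ) ^ (q - 1) - 1} with hI
  set φ : Polynomial ℤ →+* (Polynomial ℤ ⧸ I) := Ideal.Quotient.mk I with hφ
  set ξ : Polynomial ℤ ⧸ I := φ Polynomial.X with hξdef
  have hξ : ξ ^ (q - 1) = 1 := by
    rw [hξdef, ← map_pow, ← map_one φ]
    exact Ideal.Quotient.eq.mpr (Ideal.mem_span_singleton_self _)
  have hξmod : ∀ a : ℕ, ξ ^ a = ξ ^ (a % (q - 1)) := by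
    intro a
    conv_lhs => rw [← Nat.div_add_mod a (q - 1)]
    rw [pow_add, pow_mul, hξ, one_pow, one_mul]
  obtain ⟨hgpow1, hgdist⟩ := gw_g_facts hq hurep hg hgen
  have hρg0 : residue V g ≠ 0 := fun h => hg ((residue_eq_zero_iff g).mp h)
  have hgmod : ∀ a : ℕ, residue V g ^ a = residue V g ^ (a % (q - 1)) := by
    intro a
    conv_lhs => rw [← Nat.div_add_mod a (q - 1)]
    rw [pow_add, pow_mul, hgpow1, one_pow, one_mul]
  have hlog : ∀ x : ResidueField V, x ≠ 0 → ∃ j, j < q - 1 ∧ x = residue V g ^ j := by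
    intro x hx
    obtain ⟨v, rfl⟩ := residue_surjective (R := V) x
    have hvm : v ∉ maximalIdeal V := fun hm => hx ((residue_eq_zero_iff v).mpr hm)
    obtain ⟨j, hj⟩ := hgen v hvm
    exact ⟨j % (q - 1), Nat.mod_lt _ hq1, by rw [hj, hgmod]⟩
  -- the indicator function
  set Ind : ResidueField V → Polynomial ℤ ⧸ I :=
    fun x => ∑ j ∈ range (q - 1), if x = residue V g ^ j then ξ ^ j else 0 with hInd
  have hind0 : Ind 0 = 0 := by
    rw [hInd]
    refine Finset.sum_eq_zero fun j _ => ?_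
    rw [if_neg]
    exact fun h => pow_ne_zero j hρg0 h.symm
  have hindval : ∀ j : ℕ, j < q - 1 → Ind (residue V g ^ j) = ξ ^ j := by
    intro j hj
    simp only [hInd]
    rw [Finset.sum_eq_single j]
    · rw [if_pos rfl]
    · intro b hb hbj
      rw [if_neg]
      intro h
      exact hbj ((hgdist b j (mem_range.mp hb) hj h.symm))
    · intro h
      exact absurd (mem_range.mpr hj) h
  have hindmul : ∀ x y : ResidueField V, Ind (x * y) = Ind x * Ind y := by
    intro x y
    by_cases hx : x = 0
    · rw [hx, zero_mul, hind0, zero_mul]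
    by_cases hy : y = 0
    · rw [hy, mul_zero, hind0, mul_zero]
    obtain ⟨j1, hj1, rfl⟩ := hlog x hx
    obtain ⟨j2, hj2, rfl⟩ := hlog y hy
    rw [hindval j1 hj1, hindval j2 hj2, ← pow_add, hgmod,
      hindval _ (Nat.mod_lt _ hq1), ← hξmod, pow_add]
  -- sum formula for φ (G N)
  have sumG : ∀ N : ℕ, φ (G N) = ∑ m ∈ range (N + 1), Ind (residue V (F m (u N))) := by
    intro N
    have hcard : ∀ j : ℕ, (Nat.card {m : ℕ | m ≤ N ∧
        residue V (F m (u N)) = residue V g ^ (j : ℤ)} : ℤ) =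
        (((range (N + 1)).filter
          (fun m => residue V (F m (u N)) = residue V g ^ j)).card : ℤ) := by
      intro j
      congr 1
      have hset : {m : ℕ | m ≤ N ∧ residue V (F m (u N)) = residue V g ^ (j : ℤ)} =
          ↑((range (N + 1)).filter (fun m => residue V (F m (u N)) = residue V g ^ j)) := by
        ext m
        simp [Nat.lt_succ_iff, zpow_natCast]
      rw [hset, Nat.card_coe_set_eq, Set.ncard_coe_finset]
    rw [hG N, map_sum]
    have hterm : ∀ j ∈ range (q - 1),
        φ (Polynomial.C ((Nat.card {m : ℕ | m ≤ N ∧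
            residue V (F m (u N)) = residue V g ^ (j : ℤ)} : ℤ)) * Polynomial.X ^ j) =
        ∑ m ∈ range (N + 1),
          (if residue V (F m (u N)) = residue V g ^ j then ξ ^ j else 0) := by
      intro j _
      rw [map_mul, map_pow, hcard j]
      push_cast
      rw [Polynomial.C_eq_natCast, map_natCast, Finset.card_filter]
      push_cast
      rw [Finset.sum_mul]
      refine Finset.sum_congr rfl fun m _ => ?_
      split_ifs <;> simp [hξdef]
    rw [Finset.sum_congr rfl hterm, Finset.sum_comm]
  -- key multiplicative recursion
  have keyG : ∀ N : ℕ, φ (G N) = φ (G (N % q)) * φ (G (N / q)) := by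
    intro N
    have hFzero : ∀ i j : ℕ, j < i → F i (u j) = 0 := by
      intro i j hji
      have h2 := hF i (u j)
      have hz : (∏ k ∈ range i, (u j - u k)) = 0 :=
        Finset.prod_eq_zero (mem_range.mpr hji) (sub_self (u j))
      rw [hz] at h2
      have huinj := gw_u_inj hq hπ hu0 hurep hudig
      have hDne : (∏ k ∈ range i, (u i - u k)) ≠ 0 := by
        refine Finset.prod_ne_zero_iff.mpr fun k hk => sub_ne_zero.mpr fun h => ?_
        rw [mem_range] at hk
        exact absurd (huinj h) (by omega)
      exact (mul_eq_zero.mp h2).resolve_left hDne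
    rw [sumG N, sumG (N % q), sumG (N / q), Finset.sum_mul_sum]
    have hstep1 : ∀ m ∈ range (N + 1), Ind (residue V (F m (u N))) =
        Ind (residue V (F (m % q) (u (N % q)))) * Ind (residue V (F (m / q) (u (N / q)))) := by
      intro m _
      rw [gw_lucas hq hπ hu0 hurep hudig hF N m, hindmul]
    rw [Finset.sum_congr rfl hstep1]
    set t : ℕ → Polynomial ℤ ⧸ I := fun m =>
      Ind (residue V (F (m % q) (u (N % q)))) * Ind (residue V (F (m / q) (u (N / q)))) with ht
    set B : Finset (ℕ × ℕ) := (range (N % q + 1)) ×ˢ (range (N / q + 1)) with hB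
    have hsub : B.image (fun p : ℕ × ℕ => p.1 + q * p.2) ⊆ range (N + 1) := by
      intro m hm
      rw [Finset.mem_image] at hm
      obtain ⟨p, hp, rfl⟩ := hm
      rw [hB, Finset.mem_product, mem_range, mem_range] at hp
      rw [mem_range, Nat.lt_succ_iff]
      calc p.1 + q * p.2 ≤ N % q + q * (N / q) :=
            Nat.add_le_add (by omega) (Nat.mul_le_mul_left q (by omega))
        _ = N := Nat.mod_add_div N q
    have hzero : ∀ m ∈ range (N + 1), m ∉ B.image (fun p : ℕ × ℕ => p.1 + q * p.2) →
        t m = 0 := by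
      intro m hm hnotin
      have hm0 : N % q < m % q := by
        by_contra hcon
        refine hnotin ?_
        rw [Finset.mem_image]
        refine ⟨(m % q, m / q), ?_, Nat.mod_add_div m q⟩
        rw [hB, Finset.mem_product, mem_range, mem_range]
        rw [mem_range, Nat.lt_succ_iff] at hm
        exact ⟨by omega, Nat.lt_succ_of_le (Nat.div_le_div_right hm)⟩
      simp only [ht]
      rw [hFzero (m % q) (N % q) hm0, map_zero, hind0, zero_mul]
    rw [← Finset.sum_subset hsub hzero, Finset.sum_image, hB, Finset.sum_product]
    · refine Finset.sum_congr rfl fun i hi => Finset.sum_congr rfl fun j hj => ?_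
      rw [mem_range, Nat.lt_succ_iff] at hi
      have hiq : i < q := lt_of_le_of_lt hi (Nat.mod_lt N hq0)
      simp only [ht]
      rw [Nat.add_mul_mod_self_left, Nat.mod_eq_of_lt hiq,
        Nat.add_mul_div_left _ _ hq0, Nat.div_eq_of_lt hiq, zero_add]
    · intro p hp p' hp' hpp
      rw [Finset.mem_coe, hB, Finset.mem_product, mem_range, mem_range, Nat.lt_succ_iff, Nat.lt_succ_iff] at hp hp'
      have h1 : p.1 < q := lt_of_le_of_lt hp.1 (Nat.mod_lt N hq0)
      have h1' : p'.1 < q := lt_of_le_of_lt hp'.1 (Nat.mod_lt N hq0)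
      have hmod := congrArg (· % q) hpp
      simp only [Nat.add_mul_mod_self_left] at hmod
      rw [Nat.mod_eq_of_lt h1, Nat.mod_eq_of_lt h1'] at hmod
      beta_reduce at hpp
      rw [hmod] at hpp
      have h2 : q * p.2 = q * p'.2 := Nat.add_left_cancel hpp
      exact Prod.ext hmod (Nat.eq_of_mul_eq_mul_left hq0 h2)
  -- main induction
  suffices H : ∀ N : ℕ, φ (G N) = φ (∏ j ∈ range q, (G j) ^ (e j N)) by
    exact Ideal.Quotient.eq.mp (H n)
  intro N
  induction N using Nat.strong_induction_on with
  | _ N ih =>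
    rcases Nat.eq_zero_or_pos N with rfl | hN
    · have h0 : (∏ j ∈ range q, (G j) ^ (e j 0)) = G 0 := by
        calc ∏ j ∈ range q, (G j) ^ (e j 0)
            = ∏ j ∈ range q, (if j = 0 then G j else 1) := by
              refine Finset.prod_congr rfl fun j _ => ?_
              rcases Nat.eq_zero_or_pos j with rfl | hj
              · rw [he00, pow_one, if_pos rfl]
              · rw [he0 j hj, pow_zero, if_neg (by omega)]
          _ = G 0 := by rw [Finset.prod_ite_eq' (range q) 0 G, if_pos (mem_range.mpr hq0)]
      rw [h0]
    · by_cases hNq : N < q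
      · have hd : Nat.digits q N = [N] := by
          rw [Nat.digits_def' (by omega : 1 < q) hN, Nat.mod_eq_of_lt hNq,
            Nat.div_eq_of_lt hNq, Nat.digits_zero]
        have h0 : (∏ j ∈ range q, (G j) ^ (e j N)) = G N := by
          calc ∏ j ∈ range q, (G j) ^ (e j N)
              = ∏ j ∈ range q, (if j = N then G j else 1) := by
                refine Finset.prod_congr rfl fun j _ => ?_
                rw [he j N hN, hd]
                by_cases hjN : j = N
                · subst hjN; simp
                · rw [if_neg hjN]
                  have : [N].count j = 0 := by
                    simp [List.count_singleton']
                    omega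
                  rw [this, pow_zero]
            _ = G N := by rw [Finset.prod_ite_eq' (range q) N G, if_pos (mem_range.mpr hNq)]
        rw [h0]
      · have hN1 : 0 < N / q := Nat.div_pos (le_of_not_gt hNq) hq0
        have hNlt : N / q < N := Nat.div_lt_self hN (by omega)
        have hd : Nat.digits q N = N % q :: Nat.digits q (N / q) :=
          Nat.digits_def' (by omega : 1 < q) hN
        have hsplitprod : ∏ j ∈ range q, (G j) ^ (e j N) =
            (∏ j ∈ range q, (G j) ^ (e j (N / q))) * G (N % q) := by
          calc ∏ j ∈ range q, (G j) ^ (e j N)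
              = ∏ j ∈ range q, ((G j) ^ (e j (N / q)) * if N % q = j then G j else 1) := by
                refine Finset.prod_congr rfl fun j _ => ?_
                rw [he j N hN, hd]
                have hcnt : (N % q :: Nat.digits q (N / q)).count j =
                    (Nat.digits q (N / q)).count j + if N % q = j then 1 else 0 := by
                  simp [List.count_cons]
                rw [hcnt, ← he j (N / q) hN1, pow_add]
                congr 1
                split_ifs <;> simp
            _ = _ := by
                rw [Finset.prod_mul_distrib, Finset.prod_ite_eq (range q) (N % q) G,
                  if_pos (mem_range.mpr (Nat.mod_lt N hq0))]
        rw [hsplitprod, map_mul, ← ih (N / q) hNlt, keyG N, mul_comm]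
end

section
/- With G_n as above, if n has base-q expansion n = Σ_{i=0}^r n_i q^i, then G_n(x) ≡ G_{n_0}(x) · G_{n_1}(x) ⋯ G_{n_r}(x) (mod x^{q−1} − 1). -/
/-- If `n` has base-`q` expansion `n = Σ_{i=0}^r n_i q^i` (digits `n_0, ..., n_r`),
then `G n ≡ G n_0 * G n_1 * ⋯ * G n_r (mod x^(q-1) - 1)`. -/
theorem G_digit_product
    (V : Type*) [CommRing V] [IsDomain V] [IsDiscreteValuationRing V]
    (q : ℕ) (hq : 2 ≤ q)
    (π : V) (hπ : Irreducible π)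
    (hmax : IsLocalRing.maximalIdeal V = Ideal.span {π})
    (u : ℕ → V) (hu0 : u 0 = 0)
    (hurep : ∀ a : V, ∃! i : ℕ, i < q ∧ a - u i ∈ IsLocalRing.maximalIdeal V)
    (hudig : ∀ n : ℕ, u n = ∑ i ∈ Finset.range (Nat.digits q n).length,
        u ((Nat.digits q n).getD i 0) * π ^ i)
    (F : ℕ → V → V) (hF0 : ∀ x : V, F 0 x = 1)
    (hF : ∀ (n : ℕ) (x : V),
        (∏ k ∈ Finset.range n, (u n - u k)) * F n x = ∏ k ∈ Finset.range n, (x - u k))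
    (g : V) (hg : g ∉ IsLocalRing.maximalIdeal V)
    (hgen : ∀ a : V, a ∉ IsLocalRing.maximalIdeal V →
        ∃ j : ℕ, IsLocalRing.residue V a = IsLocalRing.residue V g ^ j)
    (G : ℕ → Polynomial ℤ)
    (hG : ∀ n : ℕ, G n = ∑ j ∈ Finset.range (q - 1),
        Polynomial.C ((Nat.card {m : ℕ | m ≤ n ∧
            IsLocalRing.residue V (F m (u n)) = IsLocalRing.residue V g ^ (j : ℤ)} : ℤ)) *
          Polynomial.X ^ j)
    (n : ℕ) (hn : 0 < n) :
    G n - ((Nat.digits q n).map G).prod ∈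
      Ideal.span {(Polynomial.X : Polynomial ℤ) ^ (q - 1) - 1} := by
  classical
  set κ := IsLocalRing.ResidueField V with hκ
  set r : V →+* κ := IsLocalRing.residue V with hr
  have hq1 : 1 < q := hq
  have hq0 : 0 < q := by omega
  have hq1' : 0 < q - 1 := by omega
  have hπ0 : π ≠ 0 := hπ.ne_zero
  have hπm : π ∈ IsLocalRing.maximalIdeal V := by
    rw [hmax]; exact Ideal.mem_span_singleton_self π
  have hmem : ∀ a : V, r a = 0 ↔ a ∈ IsLocalRing.maximalIdeal V := fun a =>
    IsLocalRing.residue_eq_zero_iff a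
  have hrπ : r π = 0 := (hmem π).mpr hπm
  have hgne : r g ≠ 0 := fun h => hg ((hmem g).mp h)
  have hsubmem : ∀ a b : V, r a = r b ↔ a - b ∈ IsLocalRing.maximalIdeal V := by
    intro a b
    rw [← hmem, map_sub, sub_eq_zero]
  -- residues of u are distinct for indices < q
  have huinjres : ∀ i j : ℕ, i < q → j < q → r (u i) = r (u j) → i = j := by
    intro i j hi hj hij
    obtain ⟨k, -, hk⟩ := hurep (u i)
    have h1 : i = k := hk i ⟨hi, by rw [sub_self]; exact Ideal.zero_mem _⟩
    have h2 : j = k := hk j ⟨hj, (hsubmem _ _).mp hij⟩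
    omega
  have husurj : ∀ z : κ, ∃ i : ℕ, i < q ∧ r (u i) = z := by
    intro z
    obtain ⟨a, ha⟩ := Ideal.Quotient.mk_surjective (I := IsLocalRing.maximalIdeal V) z
    obtain ⟨i, ⟨hi, hi2⟩, -⟩ := hurep a
    exact ⟨i, hi, by rw [← (hsubmem a (u i)).mpr hi2]; exact ha⟩
  -- single digit step for u
  have ustep : ∀ t : ℕ, u t = u (t % q) + π * u (t / q) := by
    intro t
    rcases Nat.eq_zero_or_pos t with h0 | ht
    · simp [h0, hu0]
    have hd : Nat.digits q t = t % q :: Nat.digits q (t / q) := Nat.digits_def' hq1 ht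
    rw [hudig t, hd]
    rw [List.length_cons, Finset.sum_range_succ']
    simp only [List.getD_cons_succ, List.getD_cons_zero, pow_zero, mul_one, pow_succ]
    rw [hudig (t / q), Finset.mul_sum]
    rw [add_comm]
    congr 1
    apply Finset.sum_congr rfl
    intro i _
    ring
  have step : ∀ a b : ℕ, u a = u b → a % q = b % q ∧ u (a / q) = u (b / q) := by
    intro a b hab
    obtain ⟨k, -, hk⟩ := hurep (u a)
    have h1 : a % q = k := hk (a % q) ⟨Nat.mod_lt _ hq0, by
      rw [ustep a]; ring_nf; simpa using Ideal.mul_mem_right (u (a/q)) _ hπm⟩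
    have h2 : b % q = k := hk (b % q) ⟨Nat.mod_lt _ hq0, by
      rw [hab, ustep b]; ring_nf; simpa using Ideal.mul_mem_right (u (b/q)) _ hπm⟩
    have hmod : a % q = b % q := h1.trans h2.symm
    refine ⟨hmod, ?_⟩
    have hthis := hab
    rw [ustep a, ustep b, hmod] at hthis
    exact mul_left_cancel₀ hπ0 (add_left_cancel hthis)
  have ustep2 : ∀ i j : ℕ, j < q → u (q * i + j) = u j + π * u i := by
    intro i j hj
    have h1 : (q*i+j) % q = j := by rw [Nat.mul_add_mod, Nat.mod_eq_of_lt hj]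
    have h2 : (q*i+j) / q = i := by rw [Nat.mul_add_div hq0, Nat.div_eq_of_lt hj, add_zero]
    rw [ustep (q*i+j), h1, h2]
  have uzero : ∀ t : ℕ, u t = 0 → t = 0 := by
    intro t
    induction t using Nat.strong_induction_on with
    | _ t ih =>
      intro ht
      rcases Nat.eq_zero_or_pos t with h0 | htpos
      · exact h0
      have hstep := step t 0 (by simp [ht, hu0])
      rw [Nat.zero_mod, Nat.zero_div, hu0] at hstep
      have hdiv : t / q = 0 := ih (t / q) (Nat.div_lt_self htpos hq1) hstep.2
      have h1 := hstep.1
      have ht2 := Nat.div_add_mod t q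
      rw [hdiv, Nat.mul_zero] at ht2
      omega
  have uinj : ∀ a b : ℕ, u a = u b → a = b := by
    intro a
    induction a using Nat.strong_induction_on with
    | _ a ih =>
      intro b hab
      rcases Nat.eq_zero_or_pos a with h0 | hapos
      · subst h0; exact (uzero b (by rw [← hab, hu0])).symm
      obtain ⟨hmod, hdiv⟩ := step a b hab
      have hd := ih (a / q) (Nat.div_lt_self hapos hq1) (b / q) hdiv
      conv_lhs => rw [← Nat.div_add_mod a q]
      conv_rhs => rw [← Nat.div_add_mod b q]
      rw [hd, hmod]
  have cne : ∀ m : ℕ, (∏ k ∈ Finset.range m, (u m - u k)) ≠ 0 := by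
    intro m
    rw [Finset.prod_ne_zero_iff]
    intro k hk
    rw [Finset.mem_range] at hk
    intro h
    have := uinj m k (by rwa [sub_eq_zero] at h)
    omega
  have Fzero : ∀ m t : ℕ, t < m → F m (u t) = 0 := by
    intro m t ht
    have h := hF m (u t)
    have : (∏ k ∈ Finset.range m, (u t - u k)) = 0 :=
      Finset.prod_eq_zero (Finset.mem_range.mpr ht) (by rw [sub_self])
    rw [this] at h
    exact (mul_eq_zero.mp h).resolve_left (cne m)
  -- finiteness of the residue field
  have hfin : Finite κ := Finite.of_surjective (fun i : Fin q => r (u i))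
    (fun z => by obtain ⟨i, hi, hiz⟩ := husurj z; exact ⟨⟨i, hi⟩, hiz⟩)
  letI : Fintype κ := Fintype.ofFinite κ
  have hbij : Function.Bijective (fun i : Fin q => r (u i)) :=
    ⟨fun i j hij => Fin.ext (huinjres i j i.2 j.2 hij),
     fun z => by obtain ⟨i, hi, hz⟩ := husurj z; exact ⟨⟨i, hi⟩, hz⟩⟩
  have hcard : Fintype.card κ = q := by
    rw [← Fintype.card_of_bijective hbij, Fintype.card_fin]
  have hgpow : (r g) ^ (q - 1) = 1 := by
    have := FiniteField.pow_card_sub_one_eq_one (r g) hgne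
    rwa [hcard] at this
  have hgmod : ∀ s : ℕ, (r g) ^ s = (r g) ^ (s % (q - 1)) := by
    intro s
    conv_lhs => rw [← Nat.div_add_mod s (q - 1)]
    rw [pow_add, pow_mul, hgpow, one_pow, one_mul]
  -- discrete log
  have hdlex : ∀ z : κ, ∃ j : ℕ, z ≠ 0 → (r g) ^ j = z := by
    intro z
    by_cases hz : z = 0
    · exact ⟨0, fun h => absurd hz h⟩
    · obtain ⟨a, ha⟩ := Ideal.Quotient.mk_surjective (I := IsLocalRing.maximalIdeal V) z
      have ham : a ∉ IsLocalRing.maximalIdeal V := by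
        intro h; exact hz (by rw [← ha]; exact (hmem a).mpr h)
      obtain ⟨j, hj⟩ := hgen a ham
      exact ⟨j, fun _ => by rw [← hj]; exact ha⟩
  choose dl hdl using hdlex
  -- injectivity of powers of g below q-1
  have hinj : ∀ s t : ℕ, s < q - 1 → t < q - 1 → (r g) ^ s = (r g) ^ t → s = t := by
    have himg : (Finset.range (q-1)).image (fun j => (r g) ^ j) =
        Finset.univ.erase (0 : κ) := by
      apply Finset.Subset.antisymm
      · intro z hz
        obtain ⟨j, -, rfl⟩ := Finset.mem_image.mp hz
        exact Finset.mem_erase.mpr ⟨pow_ne_zero _ hgne, Finset.mem_univ _⟩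
      · intro z hz
        have hz0 : z ≠ 0 := (Finset.mem_erase.mp hz).1
        refine Finset.mem_image.mpr ⟨dl z % (q - 1),
          Finset.mem_range.mpr (Nat.mod_lt _ hq1'), ?_⟩
        rw [← hgmod]
        exact hdl z hz0
    have hinjOn : Set.InjOn (fun j => (r g) ^ j) ↑(Finset.range (q-1)) := by
      rw [← Finset.card_image_iff, himg,
        Finset.card_erase_of_mem (Finset.mem_univ _), Finset.card_univ, hcard,
        Finset.card_range]
    intro s t hs ht hst
    exact hinjOn (by simp [hs]) (by simp [ht]) hst
  -- quotient ring setup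
  set I : Ideal (Polynomial ℤ) :=
    Ideal.span {(Polynomial.X : Polynomial ℤ) ^ (q - 1) - 1} with hI
  set φ : Polynomial ℤ →+* Polynomial ℤ ⧸ I := Ideal.Quotient.mk I with hφ
  set y : Polynomial ℤ ⧸ I := φ Polynomial.X with hy0
  have hy : y ^ (q - 1) = 1 := by
    have : φ ((Polynomial.X : Polynomial ℤ) ^ (q - 1) - 1) = 0 :=
      Ideal.Quotient.eq_zero_iff_mem.mpr (Ideal.subset_span rfl)
    rw [map_sub, map_pow, map_one, sub_eq_zero] at this
    exact this
  have hymod : ∀ s : ℕ, y ^ s = y ^ (s % (q - 1)) := by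
    intro s
    conv_lhs => rw [← Nat.div_add_mod s (q - 1)]
    rw [pow_add, pow_mul, hy, one_pow, one_mul]
  have hycongr : ∀ s t : ℕ, (r g) ^ s = (r g) ^ t → y ^ s = y ^ t := by
    intro s t hst
    rw [hgmod s, hgmod t] at hst
    rw [hymod s, hymod t,
      hinj _ _ (Nat.mod_lt _ hq1') (Nat.mod_lt _ hq1') hst]
  -- the weight function
  set w : κ → Polynomial ℤ ⧸ I := fun z => if z = 0 then 0 else y ^ (dl z) with hw
  have hw0 : w 0 = 0 := by simp [hw]
  have hwg : ∀ j : ℕ, w ((r g) ^ j) = y ^ j := by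
    intro j
    have hne : (r g) ^ j ≠ 0 := pow_ne_zero _ hgne
    rw [hw]; simp only [hne, if_false]
    exact hycongr _ _ (hdl _ hne)
  have hwmul : ∀ a b : κ, w (a * b) = w a * w b := by
    intro a b
    by_cases ha : a = 0
    · simp [ha, hw0, hw]
    by_cases hb : b = 0
    · simp [hb, hw0, hw]
    have hab : a * b ≠ 0 := mul_ne_zero ha hb
    rw [hw]
    simp only [hab, ha, hb, if_false]
    rw [← pow_add]
    refine hycongr _ _ ?_
    rw [pow_add, hdl a ha, hdl b hb, hdl _ hab]
  -- G in the quotient as a sum of weights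
  have hwz : ∀ z : κ, w z = ∑ j ∈ Finset.range (q-1),
      if z = (r g) ^ j then y ^ j else 0 := by
    intro z
    by_cases hz : z = 0
    · subst hz
      rw [hw0]
      symm
      apply Finset.sum_eq_zero
      intro j _
      exact if_neg (fun h => (pow_ne_zero j hgne) h.symm)
    · obtain ⟨j0, hj0lt, hj0⟩ : ∃ j0, j0 < q - 1 ∧ (r g) ^ j0 = z :=
        ⟨dl z % (q-1), Nat.mod_lt _ hq1', by rw [← hgmod]; exact hdl z hz⟩
      rw [← hj0, hwg]
      rw [Finset.sum_eq_single_of_mem j0 (Finset.mem_range.mpr hj0lt)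
        (fun j hj hne => if_neg (fun h =>
          hne (hinj j j0 (Finset.mem_range.mp hj) hj0lt h.symm))), if_pos rfl]
  have sumw : ∀ t : ℕ, φ (G t) =
      ∑ m ∈ Finset.range (t + 1), w (r (F m (u t))) := by
    intro t
    have hcardset : ∀ j : ℕ,
        (Nat.card {m : ℕ | m ≤ t ∧ r (F m (u t)) = r g ^ (j : ℤ)}) =
        ((Finset.range (t+1)).filter (fun m => r (F m (u t)) = (r g) ^ j)).card := by
      intro j
      rw [Nat.card_coe_set_eq]
      have hseteq : {m : ℕ | m ≤ t ∧ r (F m (u t)) = r g ^ (j : ℤ)} =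
          ↑((Finset.range (t+1)).filter (fun m => r (F m (u t)) = (r g) ^ j)) := by
        ext m
        simp [Nat.lt_succ_iff, zpow_natCast]
      rw [hseteq, Set.ncard_coe_finset]
    calc φ (G t) = ∑ j ∈ Finset.range (q-1),
        ((((Finset.range (t+1)).filter
          (fun m => r (F m (u t)) = (r g) ^ j)).card : ℕ) : Polynomial ℤ ⧸ I) * y ^ j := by
          rw [hG t, map_sum]
          refine Finset.sum_congr rfl fun j _ => ?_
          rw [hcardset j, map_mul, map_pow]
          congr 1
      _ = ∑ j ∈ Finset.range (q-1), ∑ m ∈ Finset.range (t+1),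
            (if r (F m (u t)) = (r g) ^ j then y ^ j else 0) := by
          refine Finset.sum_congr rfl fun j _ => ?_
          rw [← Finset.sum_filter, Finset.sum_const, nsmul_eq_mul]
      _ = ∑ m ∈ Finset.range (t+1), w (r (F m (u t))) := by
          rw [Finset.sum_comm]
          exact Finset.sum_congr rfl fun m _ => (hwz _).symm
  -- Lucas lemma
  have Wuniv : ∀ t : ℕ, t < q →
      (∏ j ∈ (Finset.range q).erase t, (r (u t) - r (u j)))
        = ∏ z ∈ Finset.univ.erase (0 : κ), z := by
    intro t ht
    refine Finset.prod_bij (fun j _ => r (u t) - r (u j)) ?_ ?_ ?_ ?_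
    · intro j hj
      obtain ⟨hjt, hjq⟩ := Finset.mem_erase.mp hj
      refine Finset.mem_erase.mpr ⟨fun h0 => hjt ?_, Finset.mem_univ _⟩
      rw [sub_eq_zero] at h0
      exact huinjres j t (Finset.mem_range.mp hjq) ht h0.symm
    · intro j1 hj1 j2 hj2 h12
      have h : r (u j1) = r (u j2) := by linear_combination -h12
      exact huinjres j1 j2 (Finset.mem_range.mp (Finset.mem_erase.mp hj1).2)
        (Finset.mem_range.mp (Finset.mem_erase.mp hj2).2) h
    · intro z hz
      obtain ⟨hz0, -⟩ := Finset.mem_erase.mp hz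
      obtain ⟨j, hjq, hj⟩ := husurj (r (u t) - z)
      refine ⟨j, Finset.mem_erase.mpr ⟨fun hjt => hz0 ?_, Finset.mem_range.mpr hjq⟩,
        by show r (u t) - r (u j) = z; rw [hj]; ring⟩
      subst hjt
      linear_combination hj
    · intro j hj
      rfl
  have lucas : ∀ m' e n' d : ℕ, e < q → d < q →
      r (F (q * m' + e) (u (q * n' + d))) = r (F m' (u n')) * r (F e (u d)) := by
    intro m' e n' d he hd
    have grid : ∀ (M : ℕ) (h : ℕ → V), ∏ k ∈ Finset.range (q*M), h k
        = ∏ i ∈ Finset.range M, ∏ j ∈ Finset.range q, h (q*i + j) := by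
      intro M h
      induction M with
      | zero => simp
      | succ M ihM => rw [Nat.mul_succ, Finset.prod_range_add, ihM, Finset.prod_range_succ]
    have split : ∀ (B C : ℕ) (ζ : V), B ≤ q → C < q →
        ∏ k ∈ Finset.range (q*m'+B), (u C + π * ζ - u k)
        = π^m' * ((∏ i ∈ Finset.range m', (ζ - u i)) *
            ((∏ i ∈ Finset.range m', ∏ j ∈ (Finset.range q).erase C,
                (u C - u j + π * (ζ - u i))) *
             ∏ j ∈ Finset.range B, (u C - u j + π * (ζ - u m')))) := by
      intro B C ζ hB hC
      rw [Finset.prod_range_add, grid m' (fun k => u C + π * ζ - u k)]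
      have htail : ∏ j ∈ Finset.range B, (u C + π * ζ - u (q*m'+j))
          = ∏ j ∈ Finset.range B, (u C - u j + π * (ζ - u m')) := by
        refine Finset.prod_congr rfl fun j hj => ?_
        rw [ustep2 m' j (lt_of_lt_of_le (Finset.mem_range.mp hj) hB)]
        ring
      have hmid : ∀ i ∈ Finset.range m',
          (∏ j ∈ Finset.range q, (u C + π * ζ - u (q*i+j)))
          = (π * (ζ - u i)) *
            ∏ j ∈ (Finset.range q).erase C, (u C - u j + π * (ζ - u i)) := by
        intro i _
        have h1 : ∀ j ∈ Finset.range q,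
            (u C + π * ζ - u (q*i+j)) = (u C - u j + π * (ζ - u i)) := by
          intro j hj
          rw [ustep2 i j (Finset.mem_range.mp hj)]
          ring
        rw [Finset.prod_congr rfl h1,
          ← Finset.mul_prod_erase _ _ (Finset.mem_range.mpr hC)]
        congr 1
        ring
      rw [Finset.prod_congr rfl hmid, htail, Finset.prod_mul_distrib,
        Finset.prod_mul_distrib, Finset.prod_const, Finset.card_range]
      ring
    have hum : u (q*m'+e) = u e + π * u m' := ustep2 m' e he
    have hun : u (q*n'+d) = u d + π * u n' := ustep2 n' d hd
    have h1 := split e e (u m') he.le he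
    rw [← hum] at h1
    have h2 := split e d (u n') he.le hd
    rw [← hun] at h2
    have hFm := hF (q*m'+e) (u (q*n'+d))
    have hFm' := hF m' (u n')
    rw [h1, h2, ← hFm'] at hFm
    have keyV : ((∏ i ∈ Finset.range m', ∏ j ∈ (Finset.range q).erase e,
            (u e - u j + π * (u m' - u i))) *
          (∏ j ∈ Finset.range e, (u e - u j + π * (u m' - u m')))) *
          F (q*m'+e) (u (q*n'+d))
        = F m' (u n') * ((∏ i ∈ Finset.range m', ∏ j ∈ (Finset.range q).erase d,
            (u d - u j + π * (u n' - u i))) *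
          (∏ j ∈ Finset.range e, (u d - u j + π * (u n' - u m')))) := by
      have hne : (π^m' * (∏ i ∈ Finset.range m', (u m' - u i))) ≠ 0 :=
        mul_ne_zero (pow_ne_zero _ hπ0) (cne m')
      apply mul_left_cancel₀ hne
      linear_combination hFm
    have hres := congrArg r keyV
    simp only [map_mul] at hres
    have hrdouble : ∀ (C : ℕ) (ζ : V),
        r (∏ i ∈ Finset.range m', ∏ j ∈ (Finset.range q).erase C,
            (u C - u j + π * (ζ - u i)))
        = (∏ j ∈ (Finset.range q).erase C, (r (u C) - r (u j)))^m' := by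
      intro C ζ
      rw [map_prod]
      have hinner : ∀ i ∈ Finset.range m',
          r (∏ j ∈ (Finset.range q).erase C, (u C - u j + π * (ζ - u i)))
          = ∏ j ∈ (Finset.range q).erase C, (r (u C) - r (u j)) := by
        intro i _
        rw [map_prod]
        refine Finset.prod_congr rfl fun j _ => ?_
        rw [map_add, map_sub, map_mul, hrπ, zero_mul, add_zero]
      rw [Finset.prod_congr rfl hinner, Finset.prod_const, Finset.card_range]
    have hrsingle : ∀ (C : ℕ) (ζ : V),
        r (∏ j ∈ Finset.range e, (u C - u j + π * ζ))
        = ∏ j ∈ Finset.range e, (r (u C) - r (u j)) := by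
      intro C ζ
      rw [map_prod]
      refine Finset.prod_congr rfl fun j _ => ?_
      rw [map_add, map_sub, map_mul, hrπ, zero_mul, add_zero]
    have hrceform : r (∏ j ∈ Finset.range e, (u e - u j + π * (u m' - u m')))
        = ∏ j ∈ Finset.range e, (r (u e) - r (u j)) := hrsingle e _
    rw [hrdouble e (u m'), hrdouble d (u n'), hrceform, hrsingle d (u n' - u m')] at hres
    rw [Wuniv e he, Wuniv d hd] at hres
    -- relate the last product to r (F e (u d))
    have hFe := congrArg r (hF e (u d))
    simp only [map_mul, map_prod, map_sub] at hFe
    have hWne : (∏ z ∈ Finset.univ.erase (0 : κ), z) ≠ 0 := by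
      rw [Finset.prod_ne_zero_iff]
      intro z hz
      exact (Finset.mem_erase.mp hz).1
    have hrcene : (∏ j ∈ Finset.range e, (r (u e) - r (u j))) ≠ 0 := by
      rw [Finset.prod_ne_zero_iff]
      intro j hj
      have hje := Finset.mem_range.mp hj
      rw [sub_ne_zero]
      intro hjr
      have := huinjres e j he (lt_trans hje he) hjr
      omega
    apply mul_left_cancel₀ (mul_ne_zero (pow_ne_zero m' hWne) hrcene)
    linear_combination hres -
      ((∏ z ∈ Finset.univ.erase (0 : κ), z)^m' * r (F m' (u n'))) * hFe
  -- key product step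
  have key : ∀ n' d : ℕ, d < q → φ (G (q * n' + d)) = φ (G n') * φ (G d) := by
    intro n' d hd
    have sgrid : ∀ (M : ℕ) (h : ℕ → Polynomial ℤ ⧸ I),
        ∑ k ∈ Finset.range (q*M), h k
        = ∑ i ∈ Finset.range M, ∑ j ∈ Finset.range q, h (q*i + j) := by
      intro M h
      induction M with
      | zero => simp
      | succ M ihM => rw [Nat.mul_succ, Finset.sum_range_add, ihM, Finset.sum_range_succ]
    have hterm : ∀ i j : ℕ, j < q →
        w (r (F (q*i+j) (u (q*n'+d)))) = w (r (F i (u n'))) * w (r (F j (u d))) := by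
      intro i j hj
      rw [lucas i j n' d hj hd, hwmul]
    have hvanish : ∀ j ∈ Finset.range q, j ∉ Finset.range (d+1) →
        w (r (F j (u d))) = 0 := by
      intro j _ hjd
      rw [Finset.mem_range, not_lt] at hjd
      rw [Fzero j d (by omega), map_zero, hw0]
    have hinner : ∀ i : ℕ, (∑ j ∈ Finset.range q, w (r (F (q*i+j) (u (q*n'+d)))))
        = w (r (F i (u n'))) * ∑ j ∈ Finset.range (d+1), w (r (F j (u d))) := by
      intro i
      rw [Finset.sum_congr rfl (fun j hj => hterm i j (Finset.mem_range.mp hj)),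
        ← Finset.mul_sum]
      congr 1
      exact (Finset.sum_subset
        (Finset.range_subset_range.mpr (show d + 1 ≤ q by omega)) hvanish).symm
    rw [sumw (q*n'+d), sumw n', sumw d]
    have hsplit : q * n' + d + 1 = q * n' + (d + 1) := by omega
    rw [hsplit, Finset.sum_range_add, sgrid n']
    rw [Finset.sum_congr rfl (fun i _ => hinner i)]
    have htail : (∑ j ∈ Finset.range (d+1), w (r (F (q*n'+j) (u (q*n'+d)))))
        = w (r (F n' (u n'))) * ∑ j ∈ Finset.range (d+1), w (r (F j (u d))) := by
      rw [Finset.sum_congr rfl (fun j hj => hterm n' j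
        (by have := Finset.mem_range.mp hj; omega)), ← Finset.mul_sum]
    rw [htail, ← Finset.sum_mul,
      show (∑ m ∈ Finset.range (n'+1), w (r (F m (u n'))))
        = (∑ i ∈ Finset.range n', w (r (F i (u n')))) + w (r (F n' (u n')))
        from Finset.sum_range_succ _ _, add_mul]
  -- final induction
  have main : ∀ N : ℕ, 0 < N → G N - ((Nat.digits q N).map G).prod ∈ I := by
    intro N
    induction N using Nat.strong_induction_on with
    | _ N ih =>
      intro hN
      rw [Nat.digits_def' hq1 hN, List.map_cons, List.prod_cons]
      by_cases hNq : N / q = 0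
      · have hNlt : N < q := (Nat.div_eq_zero_iff.mp hNq).resolve_left (by omega)
        rw [hNq, Nat.digits_zero, List.map_nil, List.prod_nil, mul_one,
          Nat.mod_eq_of_lt hNlt, sub_self]
        exact Ideal.zero_mem _
      · have hlt : N / q < N := Nat.div_lt_self hN hq1
        have ihm := ih (N / q) hlt (Nat.pos_of_ne_zero hNq)
        rw [← Ideal.Quotient.eq_zero_iff_mem] at ihm ⊢
        have h1 : φ (G N) = φ (G (N / q)) * φ (G (N % q)) := by
          have := key (N / q) (N % q) (Nat.mod_lt _ hq0)
          rwa [Nat.div_add_mod] at this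
        have h2 : φ (G (N / q)) = φ (((Nat.digits q (N / q)).map G).prod) := by
          have : φ (G (N / q) - ((Nat.digits q (N / q)).map G).prod) =
              φ (G (N / q)) - φ (((Nat.digits q (N / q)).map G).prod) := map_sub _ _ _
          rw [this, sub_eq_zero] at ihm
          exact ihm
        rw [map_sub, h1, h2, map_mul]
        ring
  exact main n hn
end

section
/- With notation as above, the map Γ sending a tuple α over R to the class of Σ_{m=0}^{q−2} ε_m(u_{z_α}) x^m in ℤ[x]/(x^{q−1}−1) is a semigroup homomorphism from the concatenation semigroup of nonempty tuples over R to the multiplicative semigroup of ℤ[x]/(x^{q−1}−1): Γ(α∙β) = Γ(α)·Γ(β). -/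
open Finset

section Aux
variable {V : Type*} [CommRing V] [IsDomain V] [IsDiscreteValuationRing V]
  {q : ℕ} (hq : 2 ≤ q) {π : V} (hπ : Irreducible π)
  (hmax : IsLocalRing.maximalIdeal V = Ideal.span {π})
  {u : ℕ → V} (hu0 : u 0 = 0)
  (hudig : ∀ n : ℕ, u n = ∑ i ∈ Finset.range (Nat.digits q n).length,
      u ((Nat.digits q n).getD i 0) * π ^ i)

include hq hu0 hudig in
theorem udig1 (a b : ℕ) (ha : a < q) : u (a + q * b) = u a + π * u b := by
  rcases Nat.eq_zero_or_pos b with rfl | hb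
  · simp [hu0]
  have hd : Nat.digits q (a + q * b) = a :: Nat.digits q b := by
    rw [Nat.digits_def' (by omega : 1 < q) (by positivity)]
    rw [Nat.add_mul_mod_self_left, Nat.add_mul_div_left _ _ (by omega : 0 < q),
      Nat.mod_eq_of_lt ha, Nat.div_eq_of_lt ha, Nat.zero_add]
  have e1 := hudig (a + q * b)
  rw [hd] at e1
  have e2 := hudig b
  rw [e1, List.length_cons, Finset.sum_range_succ']
  simp only [List.getD_cons_succ, List.getD_cons_zero, pow_zero, mul_one, pow_succ]
  rw [e2, Finset.mul_sum]
  rw [add_comm]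
  exact congrArg₂ (· + ·) rfl (Finset.sum_congr rfl fun i _ => by ring)

include hq hu0 hudig in
theorem udigL (L a b : ℕ) (ha : a < q ^ L) : u (a + q ^ L * b) = u a + π ^ L * u b := by
  induction L generalizing a b with
  | zero =>
    have : a = 0 := by simpa using ha
    subst this
    simp [hu0]
  | succ L ih =>
    have ha0 : a % q < q := Nat.mod_lt _ (by omega)
    have ha1 : a / q < q ^ L := by
      rw [Nat.div_lt_iff_lt_mul (by omega : 0 < q)]
      calc a < q ^ (L + 1) := ha
      _ = q ^ L * q := by ring
    have e0 : a + q ^ (L + 1) * b = a % q + q * (a / q + q ^ L * b) := by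
      rw [Nat.mul_add, ← Nat.add_assoc, Nat.mod_add_div]
      ring
    rw [e0, udig1 hq hu0 hudig _ _ ha0, ih _ _ ha1]
    have e1 : u a = u (a % q) + π * u (a / q) := by
      conv_lhs => rw [← Nat.mod_add_div a q]
      exact udig1 hq hu0 hudig _ _ ha0
    rw [e1]
    ring

variable (hurep : ∀ a : V, ∃! i : ℕ, i < q ∧ a - u i ∈ IsLocalRing.maximalIdeal V)

include hurep in
theorem uresinj {a b : ℕ} (ha : a < q) (hb : b < q)
    (h : IsLocalRing.residue V (u a) = IsLocalRing.residue V (u b)) : a = b := by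
  obtain ⟨i, _, hiu⟩ := hurep (u a)
  have h1 : a = i := hiu a ⟨ha, by simp⟩
  have h2 : b = i := hiu b ⟨hb, by
    have := (Ideal.Quotient.eq (I := IsLocalRing.maximalIdeal V)).1 h
    exact this⟩
  omega

include hurep in
theorem uressurj (x : IsLocalRing.ResidueField V) : ∃ i, i < q ∧ IsLocalRing.residue V (u i) = x := by
  obtain ⟨a, rfl⟩ := Ideal.Quotient.mk_surjective x
  obtain ⟨i, ⟨hi, hmem⟩, -⟩ := hurep a
  exact ⟨i, hi, ((Ideal.Quotient.eq (I := IsLocalRing.maximalIdeal V)).2 hmem).symm⟩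

include hmax in
theorem res_pi_zero : IsLocalRing.residue V π = 0 := by
  have : π ∈ IsLocalRing.maximalIdeal V := by
    rw [hmax]; exact Ideal.mem_span_singleton_self π
  exact Ideal.Quotient.eq_zero_iff_mem.mpr this

include hurep in
theorem res_diff_ne {a b : ℕ} (ha : a < q) (hb : b < q) (hab : a ≠ b) :
    IsLocalRing.residue V (u a - u b) ≠ 0 := by
  intro h
  rw [map_sub, sub_eq_zero] at h
  exact hab (uresinj hurep ha hb h)

include hq hπ hmax hu0 hudig hurep in
theorem uinj : Function.Injective u := by
  have key : ∀ N a b, a + b ≤ N → u a = u b → a = b := by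
    intro N
    induction N with
    | zero => intro a b h _; omega
    | succ N ih =>
      intro a b hab h
      have ha0 : a % q < q := Nat.mod_lt _ (by omega)
      have hb0 : b % q < q := Nat.mod_lt _ (by omega)
      have ea : u a = u (a % q) + π * u (a / q) := by
        conv_lhs => rw [← Nat.mod_add_div a q]
        exact udig1 hq hu0 hudig _ _ ha0
      have eb : u b = u (b % q) + π * u (b / q) := by
        conv_lhs => rw [← Nat.mod_add_div b q]
        exact udig1 hq hu0 hudig _ _ hb0
      have hres : IsLocalRing.residue V (u (a % q)) = IsLocalRing.residue V (u (b % q)) := by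
        have := congrArg (IsLocalRing.residue V) (ea ▸ eb ▸ h)
        simpa [map_add, map_mul, res_pi_zero hmax] using this
      have hmod : a % q = b % q := uresinj hurep ha0 hb0 hres
      have hdiv : u (a / q) = u (b / q) := by
        have h2 : π * u (a / q) = π * u (b / q) := by
          have := h
          rw [ea, eb, hmod] at this
          exact add_left_cancel this
        exact mul_left_cancel₀ hπ.ne_zero h2
      by_cases hsm : a < q ∧ b < q
      · have : a % q = a := Nat.mod_eq_of_lt hsm.1
        have : b % q = b := Nat.mod_eq_of_lt hsm.2
        omega
      · have hlt : a / q + b / q ≤ N := by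
          have hda : a / q ≤ a := Nat.div_le_self _ _
          have hdb : b / q ≤ b := Nat.div_le_self _ _
          rcases not_and_or.mp hsm with hx | hx
          · have h1 : a / q < a := Nat.div_lt_self (by omega) (by omega)
            omega
          · have h1 : b / q < b := Nat.div_lt_self (by omega) (by omega)
            omega
        have hdq := ih _ _ hlt hdiv
        calc a = a % q + q * (a / q) := (Nat.mod_add_div a q).symm
        _ = b % q + q * (b / q) := by rw [hmod, hdq]
        _ = b := Nat.mod_add_div b q
  intro a b h
  exact key (a + b) a b le_rfl h

include hq hπ hmax hu0 hudig hurep in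
theorem Pself_ne (m : ℕ) : (∏ k ∈ Finset.range m, (u m - u k)) ≠ 0 := by
  rw [Finset.prod_ne_zero_iff]
  intro k hk
  have hk' := Finset.mem_range.mp hk
  rw [sub_ne_zero]
  intro h
  have := uinj hq hπ hmax hu0 hudig hurep h
  omega

include hq hπ hmax hu0 hudig hurep in
theorem F_vanish {F : ℕ → V → V}
    (hF : ∀ (n : ℕ) (x : V),
      (∏ k ∈ Finset.range n, (u n - u k)) * F n x = ∏ k ∈ Finset.range n, (x - u k))
    {m n : ℕ} (h : n < m) : F m (u n) = 0 := by
  have h0 : (∏ k ∈ Finset.range m, (u n - u k)) = 0 :=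
    Finset.prod_eq_zero (Finset.mem_range.mpr h) (sub_self _)
  have := hF m (u n)
  rw [h0] at this
  rcases mul_eq_zero.mp this with h1 | h1
  · exact absurd h1 (Pself_ne hq hπ hmax hu0 hudig hurep m)
  · exact h1

omit [IsDomain V] [IsDiscreteValuationRing V] in
theorem prod_qmul {M : Type*} [CommMonoid M] (f : ℕ → M) (m₁ : ℕ) :
    ∏ k ∈ Finset.range (q * m₁), f k = ∏ s ∈ Finset.range m₁, ∏ r ∈ Finset.range q, f (r + q * s) := by
  induction m₁ with
  | zero => simp
  | succ t ih =>
    have : q * (t + 1) = q * t + q := by ring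
    rw [this, Finset.prod_range_add, ih, Finset.prod_range_succ]
    congr 1
    exact Finset.prod_congr rfl fun x _ => by rw [Nat.add_comm]

omit [IsDomain V] [IsDiscreteValuationRing V] in
theorem prod_block {M : Type*} [CommMonoid M] (f : ℕ → M) (m₀ m₁ : ℕ) :
    ∏ k ∈ Finset.range (m₀ + q * m₁), f k =
      (∏ s ∈ Finset.range m₁, ∏ r ∈ Finset.range q, f (r + q * s)) *
        ∏ r ∈ Finset.range m₀, f (r + q * m₁) := by
  rw [Nat.add_comm, Finset.prod_range_add, prod_qmul]
  congr 1
  exact Finset.prod_congr rfl fun x _ => by rw [Nat.add_comm]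

include hurep in
theorem delta_eq [Fintype (IsLocalRing.ResidueField V)]
    [DecidableEq (IsLocalRing.ResidueField V)] {c : ℕ} (hc : c < q) :
    ∏ r ∈ (Finset.range q).erase c, IsLocalRing.residue V (u c - u r) =
      ∏ y ∈ Finset.univ.erase (0 : IsLocalRing.ResidueField V), y := by
  refine Finset.prod_bij (fun r _ => IsLocalRing.residue V (u c - u r)) ?_ ?_ ?_ ?_
  · intro r hr
    obtain ⟨hrc, hrq⟩ := Finset.mem_erase.mp hr
    exact Finset.mem_erase.mpr ⟨res_diff_ne hurep hc (Finset.mem_range.mp hrq) (Ne.symm hrc), Finset.mem_univ _⟩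
  · intro r1 h1 r2 h2 h
    obtain ⟨h1c, h1q⟩ := Finset.mem_erase.mp h1
    obtain ⟨h2c, h2q⟩ := Finset.mem_erase.mp h2
    simp only [map_sub, sub_right_inj] at h
    exact uresinj hurep (Finset.mem_range.mp h1q) (Finset.mem_range.mp h2q) h
  · intro y hy
    obtain ⟨hy0, -⟩ := Finset.mem_erase.mp hy
    obtain ⟨i, hi, hri⟩ := uressurj hurep (IsLocalRing.residue V (u c) - y)
    refine ⟨i, Finset.mem_erase.mpr ⟨?_, Finset.mem_range.mpr hi⟩, ?_⟩
    · rintro rfl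
      exact hy0 (sub_eq_self.mp hri.symm)
    · show IsLocalRing.residue V (u c - u i) = y
      rw [map_sub, hri]; ring
  · intro r hr; rfl

include hq hπ hmax hu0 hudig hurep in
theorem lucas_step [Fintype (IsLocalRing.ResidueField V)]
    [DecidableEq (IsLocalRing.ResidueField V)]
    {F : ℕ → V → V}
    (hF : ∀ (n : ℕ) (x : V),
      (∏ k ∈ Finset.range n, (u n - u k)) * F n x = ∏ k ∈ Finset.range n, (x - u k))
    (m n : ℕ) :
    IsLocalRing.residue V (F m (u n)) =
      IsLocalRing.residue V (F (m % q) (u (n % q))) *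
        IsLocalRing.residue V (F (m / q) (u (n / q))) := by
  set φ := IsLocalRing.residue V with hφ
  set m₀ := m % q with hm₀
  set m₁ := m / q with hm₁
  set n₀ := n % q with hn₀
  set n₁ := n / q with hn₁
  have hqpos : 0 < q := by omega
  have hm0q : m₀ < q := Nat.mod_lt _ hqpos
  have hn0q : n₀ < q := Nat.mod_lt _ hqpos
  have hm' : m₀ + q * m₁ = m := Nat.mod_add_div m q
  have hn' : n₀ + q * n₁ = n := Nat.mod_add_div n q
  by_cases hcase : n₁ < m₁
  · -- both sides vanish
    have h1 : F m₁ (u n₁) = 0 := F_vanish hq hπ hmax hu0 hudig hurep hF hcase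
    have h2 : n < m := by
      have : n₀ + q * n₁ < q * (n₁ + 1) := by nlinarith
      have h3 : q * (n₁ + 1) ≤ q * m₁ := Nat.mul_le_mul_left q (by omega)
      omega
    have h4 : F m (u n) = 0 := F_vanish hq hπ hmax hu0 hudig hurep hF h2
    simp [h1, h4]
  push_neg at hcase
  -- main case : m₁ ≤ n₁
  have hun : u n = u n₀ + π * u n₁ := by
    conv_lhs => rw [← hn']
    exact udig1 hq hu0 hudig _ _ hn0q
  have hum : u m = u m₀ + π * u m₁ := by
    conv_lhs => rw [← hm']
    exact udig1 hq hu0 hudig _ _ hm0q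
  have hfact : ∀ c d : ℕ, c < q → ∀ r : ℕ, r < q → ∀ s : ℕ,
      (u c + π * u d) - u (r + q * s) = u c - u r + π * (u d - u s) := by
    intro c d hc r hr s
    rw [udig1 hq hu0 hudig _ _ hr]
    ring
  have hblock : ∀ c d : ℕ, c < q → ∀ s : ℕ,
      ∏ r ∈ Finset.range q, ((u c + π * u d) - u (r + q * s)) =
        π * (u d - u s) * ∏ r ∈ (Finset.range q).erase c, (u c - u r + π * (u d - u s)) := by
    intro c d hc s
    rw [Finset.prod_congr rfl (fun r hr => hfact c d hc r (Finset.mem_range.mp hr) s),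
      ← Finset.mul_prod_erase (Finset.range q)
        (fun r => u c - u r + π * (u d - u s)) (Finset.mem_range.mpr hc)]
    rw [sub_self, zero_add]
  -- abbreviations
  set Wn := ∏ s ∈ Finset.range m₁, ∏ r ∈ (Finset.range q).erase n₀,
      (u n₀ - u r + π * (u n₁ - u s)) with hWn
  set Wm := ∏ s ∈ Finset.range m₁, ∏ r ∈ (Finset.range q).erase m₀,
      (u m₀ - u r + π * (u m₁ - u s)) with hWm
  set Tn := ∏ r ∈ Finset.range m₀, (u n₀ - u r + π * (u n₁ - u m₁)) with hTn
  set Tm := ∏ r ∈ Finset.range m₀, (u m₀ - u r + π * (u m₁ - u m₁)) with hTm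
  have hPdecomp : ∀ c d : ℕ, c < q →
      ∏ k ∈ Finset.range m, ((u c + π * u d) - u k) =
        π ^ m₁ * (∏ s ∈ Finset.range m₁, (u d - u s)) *
          (∏ s ∈ Finset.range m₁, ∏ r ∈ (Finset.range q).erase c,
            (u c - u r + π * (u d - u s))) *
          ∏ r ∈ Finset.range m₀, (u c - u r + π * (u d - u m₁)) := by
    intro c d hc
    conv_lhs => rw [← hm']
    rw [prod_block]
    rw [Finset.prod_congr rfl (fun s _ => hblock c d hc s),
      Finset.prod_congr rfl (fun r hr => hfact c d hc r (by
        have := Finset.mem_range.mp hr; omega) m₁),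
      Finset.prod_mul_distrib, Finset.prod_mul_distrib, Finset.prod_const,
      Finset.card_range]
  have hPn := hPdecomp n₀ n₁ hn0q
  have hPm := hPdecomp m₀ m₁ hm0q
  rw [← hun] at hPn
  rw [← hum] at hPm
  -- the main equation
  have h1 := hF m (u n)
  rw [hPm, hPn] at h1
  have h2 := hF m₁ (u n₁)
  have hPm₁ : (∏ s ∈ Finset.range m₁, (u m₁ - u s)) ≠ 0 :=
    Pself_ne hq hπ hmax hu0 hudig hurep m₁
  have hπpow : (π : V) ^ m₁ ≠ 0 := pow_ne_zero _ hπ.ne_zero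
  have key : (π ^ m₁ * ∏ s ∈ Finset.range m₁, (u m₁ - u s)) * (Wm * Tm * F m (u n)) =
      (π ^ m₁ * ∏ s ∈ Finset.range m₁, (u m₁ - u s)) * (F m₁ (u n₁) * Wn * Tn) := by
    linear_combination h1 - π ^ m₁ * Wn * Tn * h2
  have heq := mul_left_cancel₀ (mul_ne_zero hπpow hPm₁) key
  -- apply residue map
  have hres := congrArg φ heq
  simp only [map_mul] at hres
  -- compute residues of W's
  have hπ0 : φ π = 0 := res_pi_zero hmax
  set δ := ∏ y ∈ Finset.univ.erase (0 : IsLocalRing.ResidueField V), y with hδ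
  have hWres : ∀ c d : ℕ, c < q →
      φ (∏ s ∈ Finset.range m₁, ∏ r ∈ (Finset.range q).erase c,
        (u c - u r + π * (u d - u s))) = δ ^ m₁ := by
    intro c d hc
    rw [map_prod]
    have : ∀ s ∈ Finset.range m₁,
        φ (∏ r ∈ (Finset.range q).erase c, (u c - u r + π * (u d - u s))) = δ := by
      intro s _
      rw [map_prod]
      rw [Finset.prod_congr rfl (fun r _ => by
        rw [map_add, map_mul, hπ0, zero_mul, add_zero] : ∀ r ∈ (Finset.range q).erase c,
          φ (u c - u r + π * (u d - u s)) = φ (u c - u r))]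
      exact delta_eq hurep hc
    rw [Finset.prod_congr rfl this, Finset.prod_const, Finset.card_range]
  have hWnres : φ Wn = δ ^ m₁ := hWres n₀ n₁ hn0q
  have hWmres : φ Wm = δ ^ m₁ := hWres m₀ m₁ hm0q
  -- residues of tails
  have hTnres : φ Tn = φ (∏ r ∈ Finset.range m₀, (u n₀ - u r)) := by
    rw [hTn, map_prod, map_prod]
    exact Finset.prod_congr rfl fun r _ => by rw [map_add, map_mul, hπ0, zero_mul, add_zero]
  have hTmres : φ Tm = φ (∏ r ∈ Finset.range m₀, (u m₀ - u r)) := by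
    rw [hTm, map_prod, map_prod]
    exact Finset.prod_congr rfl fun r _ => by rw [map_add, map_mul, hπ0, zero_mul, add_zero]
  have h3 := congrArg φ (hF m₀ (u n₀))
  rw [map_mul] at h3
  have hTm0 : φ (∏ r ∈ Finset.range m₀, (u m₀ - u r)) ≠ 0 := by
    rw [map_prod]
    refine Finset.prod_ne_zero_iff.mpr fun r hr => ?_
    exact res_diff_ne hurep hm0q (by have := Finset.mem_range.mp hr; omega)
      (by have := Finset.mem_range.mp hr; omega)
  have hδne : δ ≠ 0 :=
    Finset.prod_ne_zero_iff.mpr fun y hy => (Finset.mem_erase.mp hy).1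
  -- final cancellation
  have final : (δ ^ m₁ * φ (∏ r ∈ Finset.range m₀, (u m₀ - u r))) * φ (F m (u n)) =
      (δ ^ m₁ * φ (∏ r ∈ Finset.range m₀, (u m₀ - u r))) *
        (φ (F m₀ (u n₀)) * φ (F m₁ (u n₁))) := by
    rw [hWnres, hWmres, hTnres, hTmres] at hres
    linear_combination hres - δ ^ m₁ * φ (F m₁ (u n₁)) * h3
  exact mul_left_cancel₀ (mul_ne_zero (pow_ne_zero _ hδne) hTm0) final

include hq hπ hmax hu0 hudig hurep in
theorem lucas_split [Fintype (IsLocalRing.ResidueField V)]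
    [DecidableEq (IsLocalRing.ResidueField V)]
    {F : ℕ → V → V} (hF0 : ∀ x : V, F 0 x = 1)
    (hF : ∀ (n : ℕ) (x : V),
      (∏ k ∈ Finset.range n, (u n - u k)) * F n x = ∏ k ∈ Finset.range n, (x - u k))
    (L m n : ℕ) :
    IsLocalRing.residue V (F m (u n)) =
      IsLocalRing.residue V (F (m % q ^ L) (u (n % q ^ L))) *
        IsLocalRing.residue V (F (m / q ^ L) (u (n / q ^ L))) := by
  induction L generalizing m n with
  | zero =>
    simp only [pow_zero, Nat.mod_one, Nat.div_one, hF0]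
    rw [map_one, one_mul]
  | succ L ih =>
    have e1 : q ^ (L + 1) = q * q ^ L := by ring
    have h1 := lucas_step hq hπ hmax hu0 hudig hurep hF m n
    rw [h1, ih (m / q) (n / q)]
    have h2 := lucas_step hq hπ hmax hu0 hudig hurep hF (m % q ^ (L + 1)) (n % q ^ (L + 1))
    have e2 : ∀ x : ℕ, x % q ^ (L + 1) % q = x % q := fun x =>
      Nat.mod_mod_of_dvd x (dvd_pow_self q (Nat.succ_ne_zero L))
    have e3 : ∀ x : ℕ, x % q ^ (L + 1) / q = x / q % q ^ L := fun x => by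
      rw [e1]; exact Nat.mod_mul_right_div_self x q (q ^ L)
    have e4 : ∀ x : ℕ, x / q ^ (L + 1) = x / q / q ^ L := fun x => by
      rw [e1, Nat.div_div_eq_div_mul]
    rw [h2, e2, e2, e3, e3, e4, e4]
    ring

include hq hurep in
theorem card_res [Fintype (IsLocalRing.ResidueField V)] :
    Fintype.card (IsLocalRing.ResidueField V) = q := by
  have hbij : Function.Bijective (fun i : Fin q => IsLocalRing.residue V (u (i : ℕ))) := by
    constructor
    · intro a b h
      exact Fin.ext (uresinj hurep a.isLt b.isLt h)
    · intro y
      obtain ⟨i, hi, hres⟩ := uressurj hurep y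
      exact ⟨⟨i, hi⟩, hres⟩
  have := Fintype.card_of_bijective hbij
  rw [Fintype.card_fin] at this
  exact this.symm

include hq hurep in
theorem order_g [Fintype (IsLocalRing.ResidueField V)]
    [DecidableEq (IsLocalRing.ResidueField V)]
    {g : V} (hg : g ∉ IsLocalRing.maximalIdeal V)
    (hgen : ∀ a : V, a ∉ IsLocalRing.maximalIdeal V →
      ∃ j : ℕ, IsLocalRing.residue V a = IsLocalRing.residue V g ^ j) :
    orderOf (IsLocalRing.residue V g) = q - 1 := by
  set gbar := IsLocalRing.residue V g with hgbar
  have hg0 : gbar ≠ 0 := fun h => hg (Ideal.Quotient.eq_zero_iff_mem.mp h)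
  have hpow1 : gbar ^ (q - 1) = 1 := by
    have := FiniteField.pow_card_sub_one_eq_one gbar hg0
    rwa [card_res hq hurep] at this
  have hle : orderOf gbar ≤ q - 1 := orderOf_le_of_pow_eq_one (by omega) hpow1
  have hdpos : 0 < orderOf gbar := by
    rw [orderOf_pos_iff]
    exact isOfFinOrder_iff_pow_eq_one.mpr ⟨q - 1, by omega, hpow1⟩
  have hsub : Finset.univ.erase (0 : IsLocalRing.ResidueField V) ⊆
      (Finset.range (orderOf gbar)).image (fun j => gbar ^ j) := by
    intro y hy
    have hy0 : y ≠ 0 := (Finset.mem_erase.mp hy).1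
    obtain ⟨a, ha⟩ := Ideal.Quotient.mk_surjective y
    have hamem : a ∉ IsLocalRing.maximalIdeal V := fun h => by
      rw [← ha] at hy0
      exact hy0 (Ideal.Quotient.eq_zero_iff_mem.mpr h)
    obtain ⟨j, hj⟩ := hgen a hamem
    refine Finset.mem_image.mpr ⟨j % orderOf gbar, Finset.mem_range.mpr (Nat.mod_lt _ hdpos), ?_⟩
    rw [pow_mod_orderOf, ← hj]
    exact ha
  have hge : q - 1 ≤ orderOf gbar := by
    have h1 := Finset.card_le_card hsub
    have h2 : (Finset.univ.erase (0 : IsLocalRing.ResidueField V)).card =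
        Fintype.card (IsLocalRing.ResidueField V) - 1 := by
      rw [Finset.card_erase_of_mem (Finset.mem_univ _), Finset.card_univ]
    have h3 := Finset.card_image_le (s := Finset.range (orderOf gbar)) (f := fun j => gbar ^ j)
    rw [h2, card_res hq hurep] at h1
    rw [Finset.card_range] at h3
    omega
  omega

include hq hπ hmax hu0 hudig hurep in
theorem count_split [Fintype (IsLocalRing.ResidueField V)]
    [DecidableEq (IsLocalRing.ResidueField V)]
    {F : ℕ → V → V} (hF0 : ∀ x : V, F 0 x = 1)
    (hF : ∀ (n : ℕ) (x : V),
      (∏ k ∈ Finset.range n, (u n - u k)) * F n x = ∏ k ∈ Finset.range n, (x - u k))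
    {g : V} (hg : g ∉ IsLocalRing.maximalIdeal V)
    (hgen : ∀ a : V, a ∉ IsLocalRing.maximalIdeal V →
      ∃ j : ℕ, IsLocalRing.residue V a = IsLocalRing.residue V g ^ j)
    (L n₀ n₁ : ℕ) (hn0 : n₀ < q ^ L) {j : ℕ} (hj : j < q - 1) :
    ((Finset.range (n₀ + q ^ L * n₁ + 1)).filter
        (fun m => IsLocalRing.residue V (F m (u (n₀ + q ^ L * n₁))) =
          IsLocalRing.residue V g ^ j)).card =
      ∑ a ∈ Finset.range (q - 1), ∑ b ∈ Finset.range (q - 1),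
        if (a + b) % (q - 1) = j then
          ((Finset.range (n₀ + 1)).filter
            (fun m => IsLocalRing.residue V (F m (u n₀)) = IsLocalRing.residue V g ^ a)).card *
          ((Finset.range (n₁ + 1)).filter
            (fun m => IsLocalRing.residue V (F m (u n₁)) = IsLocalRing.residue V g ^ b)).card
        else 0 := by
  set φ := IsLocalRing.residue V with hφ
  set gbar := φ g with hgbar
  set n := n₀ + q ^ L * n₁ with hn
  have hqL : 0 < q ^ L := pow_pos (by omega) L
  have hmodn : n % q ^ L = n₀ := by
    rw [hn, Nat.add_mul_mod_self_left, Nat.mod_eq_of_lt hn0]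
  have hdivn : n / q ^ L = n₁ := by
    rw [hn, Nat.add_mul_div_left _ _ hqL, Nat.div_eq_of_lt hn0, Nat.zero_add]
  have hg0 : gbar ≠ 0 := fun h => hg (Ideal.Quotient.eq_zero_iff_mem.mp h)
  have hord : orderOf gbar = q - 1 := order_g hq hurep hg hgen
  have hinj : ∀ a b : ℕ, a < q - 1 → b < q - 1 → gbar ^ a = gbar ^ b → a = b := by
    intro a b ha hb h
    exact pow_injOn_Iio_orderOf (by rw [hord]; exact ha) (by rw [hord]; exact hb) h
  have hexp : ∀ x : IsLocalRing.ResidueField V, x ≠ 0 → ∃ a, a < q - 1 ∧ x = gbar ^ a := by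
    intro x hx
    obtain ⟨a, ha⟩ := Ideal.Quotient.mk_surjective x
    have hamem : a ∉ IsLocalRing.maximalIdeal V := fun h => by
      rw [← ha] at hx
      exact hx (Ideal.Quotient.eq_zero_iff_mem.mpr h)
    obtain ⟨i, hi⟩ := hgen a hamem
    refine ⟨i % (q - 1), Nat.mod_lt _ (by omega), ?_⟩
    rw [← hord, pow_mod_orderOf, ← hi]
    exact ha.symm
  have hsplit : ∀ m : ℕ, φ (F m (u n)) = φ (F (m % q ^ L) (u n₀)) * φ (F (m / q ^ L) (u n₁)) := by
    intro m
    have := lucas_split hq hπ hmax hu0 hudig hurep hF0 hF L m n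
    rwa [hmodn, hdivn] at this
  have hvan : ∀ a b : ℕ, b < a → φ (F a (u b)) = 0 := fun a b h => by
    rw [F_vanish hq hπ hmax hu0 hudig hurep hF h, map_zero]
  -- Step 1 : bijection with pairs
  set B := ((Finset.range (n₀ + 1)) ×ˢ (Finset.range (n₁ + 1))).filter
      (fun p => φ (F p.1 (u n₀)) * φ (F p.2 (u n₁)) = gbar ^ j) with hB
  have step1 : ((Finset.range (n + 1)).filter (fun m => φ (F m (u n)) = gbar ^ j)).card
      = B.card := by
    refine Finset.card_bij' (fun m _ => (m % q ^ L, m / q ^ L))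
      (fun p _ => p.1 + q ^ L * p.2) ?_ ?_ ?_ ?_
    · intro m hm
      obtain ⟨hmn, hmval⟩ := Finset.mem_filter.mp hm
      have hmn' : m ≤ n := Nat.lt_succ_iff.mp (Finset.mem_range.mp hmn)
      have hval := (hsplit m).symm.trans hmval
      have hne : gbar ^ j ≠ 0 := pow_ne_zero _ hg0
      have h1 : m % q ^ L ≤ n₀ := by
        by_contra hcon
        push_neg at hcon
        rw [hvan _ _ hcon, zero_mul] at hval
        exact hne hval.symm
      have h2 : m / q ^ L ≤ n₁ := by
        by_contra hcon
        push_neg at hcon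
        rw [hvan _ _ hcon, mul_zero] at hval
        exact hne hval.symm
      exact Finset.mem_filter.mpr ⟨Finset.mem_product.mpr
        ⟨Finset.mem_range.mpr (by omega), Finset.mem_range.mpr (by omega)⟩, hval⟩
    · intro p hp
      obtain ⟨hpmem, hpval⟩ := Finset.mem_filter.mp hp
      obtain ⟨hp1, hp2⟩ := Finset.mem_product.mp hpmem
      have hp1' : p.1 ≤ n₀ := Nat.lt_succ_iff.mp (Finset.mem_range.mp hp1)
      have hp2' : p.2 ≤ n₁ := Nat.lt_succ_iff.mp (Finset.mem_range.mp hp2)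
      have hmod : (p.1 + q ^ L * p.2) % q ^ L = p.1 := by
        rw [Nat.add_mul_mod_self_left, Nat.mod_eq_of_lt (by omega)]
      have hdiv : (p.1 + q ^ L * p.2) / q ^ L = p.2 := by
        rw [Nat.add_mul_div_left _ _ hqL, Nat.div_eq_of_lt (by omega), Nat.zero_add]
      refine Finset.mem_filter.mpr ⟨Finset.mem_range.mpr ?_, ?_⟩
      · have : p.1 + q ^ L * p.2 ≤ n₀ + q ^ L * n₁ := by
          have := Nat.mul_le_mul_left (q ^ L) hp2'
          omega
        omega
      · rw [hsplit, hmod, hdiv]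
        exact hpval
    · intro m _
      dsimp only
      exact Nat.mod_add_div m (q ^ L)
    · intro p hp
      obtain ⟨hpmem, -⟩ := Finset.mem_filter.mp hp
      obtain ⟨hp1, -⟩ := Finset.mem_product.mp hpmem
      have hp1' : p.1 ≤ n₀ := Nat.lt_succ_iff.mp (Finset.mem_range.mp hp1)
      have hmod : (p.1 + q ^ L * p.2) % q ^ L = p.1 := by
        rw [Nat.add_mul_mod_self_left, Nat.mod_eq_of_lt (by omega)]
      have hdiv : (p.1 + q ^ L * p.2) / q ^ L = p.2 := by
        rw [Nat.add_mul_div_left _ _ hqL, Nat.div_eq_of_lt (by omega), Nat.zero_add]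
      rw [hmod, hdiv]
  -- Step 2 : decompose B as a disjoint union
  set Aset : ℕ → ℕ → Finset ℕ := fun a n' =>
      (Finset.range (n' + 1)).filter (fun m => φ (F m (u n')) = gbar ^ a) with hAset
  have step2 : B = (((Finset.range (q - 1)) ×ˢ (Finset.range (q - 1))).filter
      (fun ab => (ab.1 + ab.2) % (q - 1) = j)).biUnion
      (fun ab => (Aset ab.1 n₀) ×ˢ (Aset ab.2 n₁)) := by
    ext p
    simp only [Finset.mem_biUnion, Finset.mem_filter, Finset.mem_product, hB, hAset]
    constructor
    · rintro ⟨⟨hp1, hp2⟩, hval⟩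
      have h1ne : φ (F p.1 (u n₀)) ≠ 0 := fun h => by
        rw [h, zero_mul] at hval
        exact (pow_ne_zero j hg0) hval.symm
      have h2ne : φ (F p.2 (u n₁)) ≠ 0 := fun h => by
        rw [h, mul_zero] at hval
        exact (pow_ne_zero j hg0) hval.symm
      obtain ⟨a, haq, hav⟩ := hexp _ h1ne
      obtain ⟨b, hbq, hbv⟩ := hexp _ h2ne
      refine ⟨(a, b), ⟨⟨Finset.mem_range.mpr haq, Finset.mem_range.mpr hbq⟩, ?_⟩,
        ⟨hp1, hav⟩, ⟨hp2, hbv⟩⟩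
      have : gbar ^ ((a + b) % (q - 1)) = gbar ^ j := by
        rw [← hord, pow_mod_orderOf, pow_add, ← hav, ← hbv]
        exact hval
      exact hinj _ _ (Nat.mod_lt _ (by omega)) hj this
    · rintro ⟨⟨a, b⟩, ⟨⟨-, -⟩, hab⟩, ⟨hp1, hav⟩, ⟨hp2, hbv⟩⟩
      refine ⟨⟨hp1, hp2⟩, ?_⟩
      rw [hav, hbv, ← pow_add, ← pow_mod_orderOf, hord, hab]
  have hdisj : ∀ x ∈ ((Finset.range (q - 1)) ×ˢ (Finset.range (q - 1))).filter
      (fun ab => (ab.1 + ab.2) % (q - 1) = j), ∀ y ∈ ((Finset.range (q - 1)) ×ˢ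
      (Finset.range (q - 1))).filter (fun ab => (ab.1 + ab.2) % (q - 1) = j),
      x ≠ y → Disjoint ((Aset x.1 n₀) ×ˢ (Aset x.2 n₁)) ((Aset y.1 n₀) ×ˢ (Aset y.2 n₁)) := by
    intro x hx y hy hxy
    obtain ⟨hxmem, -⟩ := Finset.mem_filter.mp hx
    obtain ⟨hx1, hx2⟩ := Finset.mem_product.mp hxmem
    obtain ⟨hymem, -⟩ := Finset.mem_filter.mp hy
    obtain ⟨hy1, hy2⟩ := Finset.mem_product.mp hymem
    rw [Finset.disjoint_left]
    intro p hp hp'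
    obtain ⟨hpa, hpb⟩ := Finset.mem_product.mp hp
    obtain ⟨hpa', hpb'⟩ := Finset.mem_product.mp hp'
    have e1 : x.1 = y.1 := hinj _ _ (Finset.mem_range.mp hx1) (Finset.mem_range.mp hy1)
      (((Finset.mem_filter.mp hpa).2.symm).trans (Finset.mem_filter.mp hpa').2)
    have e2 : x.2 = y.2 := hinj _ _ (Finset.mem_range.mp hx2) (Finset.mem_range.mp hy2)
      (((Finset.mem_filter.mp hpb).2.symm).trans (Finset.mem_filter.mp hpb').2)
    exact hxy (Prod.ext e1 e2)
  rw [step1, step2, Finset.card_biUnion hdisj]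
  rw [Finset.sum_filter, Finset.sum_product]
  exact Finset.sum_congr rfl fun a _ => Finset.sum_congr rfl fun b _ => by
    by_cases h : (a + b) % (q - 1) = j <;> simp [h, Finset.card_product, hAset]

end Aux

/-- The map `Γ` sending a nonempty tuple `α` over the representatives to the class of
`Σ_{m=0}^{q-2} ε_m(u (z α)) x^m` in `ℤ[x]/(x^(q-1) - 1)` is a semigroup homomorphism
from the concatenation semigroup of nonempty tuples to the multiplicative semigroup of
`ℤ[x]/(x^(q-1) - 1)`:  `Γ(α∙β) = Γ(α) * Γ(β)`. -/
theorem Gamma_hom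
    (V : Type*) [CommRing V] [IsDomain V] [IsDiscreteValuationRing V]
    (q : ℕ) (hq : 2 ≤ q)
    (π : V) (hπ : Irreducible π)
    (hmax : IsLocalRing.maximalIdeal V = Ideal.span {π})
    (u : ℕ → V) (hu0 : u 0 = 0)
    (hurep : ∀ a : V, ∃! i : ℕ, i < q ∧ a - u i ∈ IsLocalRing.maximalIdeal V)
    (hudig : ∀ n : ℕ, u n = ∑ i ∈ Finset.range (Nat.digits q n).length,
        u ((Nat.digits q n).getD i 0) * π ^ i)
    (F : ℕ → V → V) (hF0 : ∀ x : V, F 0 x = 1)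
    (hF : ∀ (n : ℕ) (x : V),
        (∏ k ∈ Finset.range n, (u n - u k)) * F n x = ∏ k ∈ Finset.range n, (x - u k))
    (g : V) (hg : g ∉ IsLocalRing.maximalIdeal V)
    (hgen : ∀ a : V, a ∉ IsLocalRing.maximalIdeal V →
        ∃ j : ℕ, IsLocalRing.residue V a = IsLocalRing.residue V g ^ j)
    (G : ℕ → Polynomial ℤ)
    (hG : ∀ n : ℕ, G n = ∑ j ∈ Finset.range (q - 1),
        Polynomial.C ((Nat.card {m : ℕ | m ≤ n ∧
            IsLocalRing.residue V (F m (u n)) = IsLocalRing.residue V g ^ (j : ℤ)} : ℤ)) *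
          Polynomial.X ^ j)
    (α β : List ℕ) (hα : ∀ d ∈ α, d < q) (hβ : ∀ d ∈ β, d < q)
    (hαne : α ≠ []) (hβne : β ≠ []) :
    Ideal.Quotient.mk (Ideal.span {(Polynomial.X : Polynomial ℤ) ^ (q - 1) - 1})
        (G ((Nat.ofDigits q (α ++ β) : ℕ))) =
      Ideal.Quotient.mk (Ideal.span {(Polynomial.X : Polynomial ℤ) ^ (q - 1) - 1})
          (G ((Nat.ofDigits q α : ℕ))) *
        Ideal.Quotient.mk (Ideal.span {(Polynomial.X : Polynomial ℤ) ^ (q - 1) - 1})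
          (G ((Nat.ofDigits q β : ℕ))) := by
  classical
  haveI hfinite : Finite (IsLocalRing.ResidueField V) := by
    refine Finite.of_surjective (fun i : Fin q => IsLocalRing.residue V (u (i : ℕ))) ?_
    intro y
    obtain ⟨i, hi, hres⟩ := uressurj hurep y
    exact ⟨⟨i, hi⟩, hres⟩
  haveI : Fintype (IsLocalRing.ResidueField V) := Fintype.ofFinite _
  set φ := IsLocalRing.residue V with hφ
  set gbar := φ g with hgbar
  set L := α.length with hL
  set n₀ := Nat.ofDigits q α with hn₀
  set n₁ := Nat.ofDigits q β with hn₁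
  set n := n₀ + q ^ L * n₁ with hn
  have hq1 : 0 < q - 1 := by omega
  have hn0L : n₀ < q ^ L := Nat.ofDigits_lt_base_pow_length (by omega) hα
  have happ : Nat.ofDigits q (α ++ β) = n := by
    rw [Nat.ofDigits_append, hn, hL, hn₀, hn₁]
  -- translate Nat.card to Finset.card
  have hcard : ∀ (j n' : ℕ),
      (Nat.card {m : ℕ | m ≤ n' ∧ φ (F m (u n')) = gbar ^ (j : ℤ)} : ℤ) =
      ((((Finset.range (n' + 1)).filter (fun m => φ (F m (u n')) = gbar ^ j)).card : ℕ) : ℤ) := by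
    intro j n'
    congr 1
    have hset : {m : ℕ | m ≤ n' ∧ φ (F m (u n')) = gbar ^ (j : ℤ)} =
        ↑((Finset.range (n' + 1)).filter (fun m => φ (F m (u n')) = gbar ^ j)) := by
      ext m
      simp [Nat.lt_succ_iff, zpow_natCast]
    rw [hset, Nat.card_coe_set_eq, Set.ncard_coe_finset]
  -- the counting identity
  have hkey : ∀ j : ℕ, j < q - 1 →
      ((Finset.range (n + 1)).filter (fun m => φ (F m (u n)) = gbar ^ j)).card =
      ∑ a ∈ Finset.range (q - 1), ∑ b ∈ Finset.range (q - 1),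
        if (a + b) % (q - 1) = j then
          ((Finset.range (n₀ + 1)).filter (fun m => φ (F m (u n₀)) = gbar ^ a)).card *
          ((Finset.range (n₁ + 1)).filter (fun m => φ (F m (u n₁)) = gbar ^ b)).card
        else 0 := fun j hj =>
    count_split hq hπ hmax hu0 hudig hurep hF0 hF hg hgen L n₀ n₁ hn0L hj
  -- quotient ring setup
  set I := Ideal.span {(Polynomial.X : Polynomial ℤ) ^ (q - 1) - 1} with hI
  set mk := Ideal.Quotient.mk I with hmk
  set x := mk Polynomial.X with hx
  have hXpow : x ^ (q - 1) = 1 := by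
    have h0 : mk ((Polynomial.X : Polynomial ℤ) ^ (q - 1) - 1) = 0 :=
      Ideal.Quotient.eq_zero_iff_mem.mpr (Ideal.mem_span_singleton_self _)
    rw [map_sub, map_pow, map_one, sub_eq_zero] at h0
    exact h0
  have hXmod : ∀ a : ℕ, x ^ a = x ^ (a % (q - 1)) := by
    intro a
    conv_lhs => rw [← Nat.mod_add_div a (q - 1)]
    rw [pow_add, pow_mul, hXpow, one_pow, mul_one]
  -- epsilon as integers
  set ε : ℕ → ℕ → ℤ := fun j n' =>
    (((Finset.range (n' + 1)).filter (fun m => φ (F m (u n')) = gbar ^ j)).card : ℤ) with hε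
  have hGmk : ∀ n' : ℕ, mk (G n') = ∑ j ∈ Finset.range (q - 1),
      mk (Polynomial.C (ε j n')) * x ^ j := by
    intro n'
    rw [hG, map_sum]
    exact Finset.sum_congr rfl fun j _ => by
      rw [map_mul, map_pow, hcard j n']
  -- integer form of the counting identity
  have hkeyZ : ∀ j ∈ Finset.range (q - 1), ε j n =
      ∑ a ∈ Finset.range (q - 1), ∑ b ∈ Finset.range (q - 1),
        if (a + b) % (q - 1) = j then ε a n₀ * ε b n₁ else 0 := by
    intro j hjm
    have hj := Finset.mem_range.mp hjm
    have := hkey j hj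
    rw [hε]
    push_cast [this]
    rfl
  -- final computation
  rw [happ, hGmk, hGmk, hGmk]
  rw [Finset.sum_mul_sum]
  have hRHS : ∀ a ∈ Finset.range (q - 1), ∀ b ∈ Finset.range (q - 1),
      (mk (Polynomial.C (ε a n₀)) * x ^ a) * (mk (Polynomial.C (ε b n₁)) * x ^ b) =
      mk (Polynomial.C (ε a n₀ * ε b n₁)) * x ^ ((a + b) % (q - 1)) := by
    intro a _ b _
    rw [Polynomial.C_mul, map_mul, ← hXmod, pow_add]
    ring
  calc ∑ j ∈ Finset.range (q - 1), mk (Polynomial.C (ε j n)) * x ^ j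
      = ∑ j ∈ Finset.range (q - 1), ∑ a ∈ Finset.range (q - 1), ∑ b ∈ Finset.range (q - 1),
          if (a + b) % (q - 1) = j then mk (Polynomial.C (ε a n₀ * ε b n₁)) * x ^ j else 0 := by
        refine Finset.sum_congr rfl fun j hjm => ?_
        rw [hkeyZ j hjm, map_sum, map_sum, Finset.sum_mul]
        refine Finset.sum_congr rfl fun a _ => ?_
        rw [map_sum, map_sum, Finset.sum_mul]
        refine Finset.sum_congr rfl fun b _ => ?_
        by_cases h : (a + b) % (q - 1) = j <;>
          simp [h]
    _ = ∑ a ∈ Finset.range (q - 1), ∑ b ∈ Finset.range (q - 1), ∑ j ∈ Finset.range (q - 1),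
          if (a + b) % (q - 1) = j then mk (Polynomial.C (ε a n₀ * ε b n₁)) * x ^ j else 0 := by
        rw [Finset.sum_comm]
        refine Finset.sum_congr rfl fun a _ => Finset.sum_comm
    _ = ∑ a ∈ Finset.range (q - 1), ∑ b ∈ Finset.range (q - 1),
          mk (Polynomial.C (ε a n₀ * ε b n₁)) * x ^ ((a + b) % (q - 1)) := by
        refine Finset.sum_congr rfl fun a _ => Finset.sum_congr rfl fun b _ => ?_
        have hmem : (a + b) % (q - 1) ∈ Finset.range (q - 1) :=
          Finset.mem_range.mpr (Nat.mod_lt _ hq1)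
        rw [Finset.sum_ite_eq (Finset.range (q - 1)) ((a + b) % (q - 1))
          (fun j => mk (Polynomial.C (ε a n₀ * ε b n₁)) * x ^ j), if_pos hmem]
    _ = ∑ a ∈ Finset.range (q - 1), ∑ b ∈ Finset.range (q - 1),
          (mk (Polynomial.C (ε a n₀)) * x ^ a) * (mk (Polynomial.C (ε b n₁)) * x ^ b) :=
        Finset.sum_congr rfl fun a ha => Finset.sum_congr rfl fun b hb =>
          (hRHS a ha b hb).symm
end

section
/- With the digit-wise construction in a DVR V with residue field of cardinality q, for every m, n ≥ 0: F_m(u_n) ≢ 0 (mod 𝔪) if and only if every base-q digit m_i of m satisfies F_{m_i}(u_{n_i}) ∉ 𝔪, where n_i are the base-q digits of n. In particular, if some digit m_i > n_i occurs with F_{m_i}(u_{n_i}) ∈ 𝔪 for all such pairs, then F_m(u_n) ∈ 𝔪. -/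
open Finset

/-- The `i`-th base-`q` digit. -/
def digF (q a i : ℕ) : ℕ := a / q ^ i % q

/-- Depth of agreement of base-`q` expansions. -/
def ddF (q a b : ℕ) : ℕ := Nat.findGreatest (fun i => a % q ^ i = b % q ^ i) (a + b + 1)

lemma digF_lt (q a i : ℕ) (hq : 2 ≤ q) : digF q a i < q := Nat.mod_lt _ (by omega)

lemma mod_pow_succ_eq (q a i : ℕ) : a % q ^ (i + 1) = a % q ^ i + q ^ i * digF q a i := by
  rw [pow_succ, digF, Nat.mod_mul]

lemma getD_digits (q : ℕ) (hq : 2 ≤ q) : ∀ i a, (Nat.digits q a).getD i 0 = digF q a i := by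
  intro i
  induction i with
  | zero =>
    intro a
    rcases Nat.eq_zero_or_pos a with h | h
    · simp [h, digF]
    · rw [Nat.digits_def' (by omega : 1 < q) h]
      simp [digF]
  | succ i ih =>
    intro a
    rcases Nat.eq_zero_or_pos a with h | h
    · simp [h, digF]
    · rw [Nat.digits_def' (by omega : 1 < q) h]
      simp only [List.getD_cons_succ, ih]
      unfold digF
      rw [Nat.div_div_eq_div_mul, pow_succ']

lemma mod_eq_iff_le_ddF {q a b : ℕ} (hq : 2 ≤ q) (hab : a ≠ b) (i : ℕ) :
    a % q ^ i = b % q ^ i ↔ i ≤ ddF q a b := by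
  constructor
  · intro h
    by_contra hlt
    push_neg at hlt
    rcases le_or_gt i (a + b + 1) with hle | hgt
    · exact Nat.findGreatest_is_greatest hlt hle h
    · have h2 : a + b + 1 < 2 ^ i :=
        lt_of_lt_of_le (Nat.lt_two_pow_self : a + b + 1 < 2 ^ (a + b + 1)) (Nat.pow_le_pow_right (by omega) (by omega))
      have hqi : a + b + 1 < q ^ i := lt_of_lt_of_le h2 (Nat.pow_le_pow_left hq i)
      rw [Nat.mod_eq_of_lt (by omega), Nat.mod_eq_of_lt (by omega)] at h
      exact hab h
  · intro h
    have hd : a % q ^ ddF q a b = b % q ^ ddF q a b :=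
      Nat.findGreatest_spec (P := fun i => a % q ^ i = b % q ^ i) (m := 0) (by omega) (by simp [Nat.mod_one])
    have h1 := Nat.mod_mod_of_dvd a (pow_dvd_pow q h)
    have h2 := Nat.mod_mod_of_dvd b (pow_dvd_pow q h)
    rw [← h1, ← h2, hd]

lemma ddF_lt {q a b N : ℕ} (hq : 2 ≤ q) (hab : a ≠ b) (ha : a < q ^ N) (hb : b < q ^ N) :
    ddF q a b < N := by
  by_contra h
  push_neg at h
  have := (mod_eq_iff_le_ddF hq hab N).mpr h
  rw [Nat.mod_eq_of_lt ha, Nat.mod_eq_of_lt hb] at this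
  exact hab this

/-- counting: number of `k < m` congruent to `r` mod `t`. -/
lemma card_filter_mod (t : ℕ) (ht : 0 < t) (r m : ℕ) :
    ((range m).filter (fun k => r % t = k % t)).card
      = m / t + if r % t < m % t then 1 else 0 := by
  induction m with
  | zero => simp
  | succ m ih =>
    by_cases ht1 : t = 1
    · subst ht1; simp [Nat.mod_one]
    have h1t : 1 % t = 1 := Nat.mod_eq_of_lt (by omega)
    have hmt : m % t < t := Nat.mod_lt _ ht
    have hrt : r % t < t := Nat.mod_lt _ ht
    have hadd : (m + 1) % t = (m % t + 1) % t := by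
      conv_lhs => rw [Nat.add_mod, h1t]
    rw [Finset.range_add_one, Finset.filter_insert]
    by_cases hd : t ∣ m + 1
    · have hdiv : (m + 1) / t = m / t + 1 := Nat.succ_div_of_dvd hd
      have h0 : (m + 1) % t = 0 := Nat.mod_eq_zero_of_dvd hd
      have hm1 : m % t = t - 1 := by
        rw [hadd] at h0
        rcases Nat.lt_or_ge (m % t + 1) t with h | h
        · rw [Nat.mod_eq_of_lt h] at h0; omega
        · omega
      by_cases hc : r % t = m % t
      · rw [if_pos hc, Finset.card_insert_of_notMem (by simp), ih, hdiv, h0]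
        split_ifs <;> omega
      · rw [if_neg hc, ih, hdiv, h0]
        split_ifs <;> omega
    · have hdiv : (m + 1) / t = m / t := Nat.succ_div_of_not_dvd hd
      have h0 : (m + 1) % t = m % t + 1 := by
        rcases Nat.lt_or_ge (m % t + 1) t with h | h
        · rw [hadd, Nat.mod_eq_of_lt h]
        · exfalso
          have he : m % t + 1 = t := by omega
          exact hd (Nat.dvd_of_mod_eq_zero (by rw [hadd, he, Nat.mod_self]))
      by_cases hc : r % t = m % t
      · rw [if_pos hc, Finset.card_insert_of_notMem (by simp), ih, hdiv, h0]
        split_ifs <;> omega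
      · rw [if_neg hc, ih, hdiv, h0]
        split_ifs <;> omega

lemma ddF_eq_card {q a b N : ℕ} (hq : 2 ≤ q) (hab : a ≠ b) (ha : a < q ^ N) (hb : b < q ^ N) :
    ddF q a b = ((range N).filter (fun i => a % q ^ (i + 1) = b % q ^ (i + 1))).card := by
  have hdN := ddF_lt hq hab ha hb
  have hset : (range N).filter (fun i => a % q ^ (i + 1) = b % q ^ (i + 1))
      = range (ddF q a b) := by
    ext i
    simp only [Finset.mem_filter, Finset.mem_range, mod_eq_iff_le_ddF hq hab]
    omega
  rw [hset, Finset.card_range]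

lemma sum_ddF (q m n : ℕ) (hq : 2 ≤ q) (hmn : m ≤ n) :
    (∑ k ∈ range m, ddF q m k ≤ ∑ k ∈ range m, ddF q n k) ∧
    ((∑ k ∈ range m, ddF q n k = ∑ k ∈ range m, ddF q m k) ↔
      ∀ i, m % q ^ i ≤ n % q ^ i) := by
  set N := n + 1 with hNdef
  have hN : n < q ^ N := by
    calc n < 2 ^ N := lt_of_lt_of_le (Nat.lt_two_pow_self : n < 2 ^ n) (Nat.pow_le_pow_right (by omega) (by omega))
    _ ≤ q ^ N := Nat.pow_le_pow_left hq N
  have key : ∀ r, m ≤ r → r < q ^ N → (∀ k, k < m → k ≠ r) →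
      ∑ k ∈ range m, ddF q r k
        = ∑ i ∈ range N, (m / q ^ (i + 1) + if r % q ^ (i + 1) < m % q ^ (i + 1) then 1 else 0) := by
    intro r hmr hrN hne
    have h1 : ∀ k ∈ range m, ddF q r k
        = ((range N).filter (fun i => r % q ^ (i + 1) = k % q ^ (i + 1))).card := by
      intro k hk
      exact ddF_eq_card hq (fun h => hne k (mem_range.mp hk) h.symm) hrN
        (lt_trans (lt_of_lt_of_le (mem_range.mp hk) hmr) hrN)
    rw [Finset.sum_congr rfl h1]
    simp only [Finset.card_filter]
    rw [Finset.sum_comm]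
    refine Finset.sum_congr rfl fun i _ => ?_
    have hc := card_filter_mod (q ^ (i + 1)) (pow_pos (by omega) _) r m
    rw [Finset.card_filter] at hc
    exact hc
  have hAn := key n hmn hN (fun k hk => by omega)
  have hAm := key m (le_refl m) (lt_of_le_of_lt hmn hN) (fun k hk => by omega)
  have hAm' : ∑ k ∈ range m, ddF q m k = ∑ i ∈ range N, m / q ^ (i + 1) := by
    rw [hAm]; simp
  constructor
  · rw [hAn, hAm']
    exact Finset.sum_le_sum fun i _ => Nat.le_add_right _ _
  · rw [hAn, hAm', Finset.sum_add_distrib]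
    have hiff : (∑ i ∈ range N, m / q ^ (i + 1))
        + (∑ i ∈ range N, if n % q ^ (i + 1) < m % q ^ (i + 1) then 1 else 0)
        = ∑ i ∈ range N, m / q ^ (i + 1)
        ↔ (∑ i ∈ range N, if n % q ^ (i + 1) < m % q ^ (i + 1) then 1 else 0) = 0 := by omega
    rw [hiff, Finset.sum_eq_zero_iff]
    constructor
    · intro h i
      match i with
      | 0 => simp [Nat.mod_one]
      | (j + 1) =>
        rcases Nat.lt_or_ge j N with hj | hj
        · have := h j (mem_range.mpr hj)
          simp only [ite_eq_right_iff] at this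
          omega
        · have hq1 : n < q ^ (j + 1) :=
            lt_of_lt_of_le hN (Nat.pow_le_pow_right (by omega) (by omega))
          rw [Nat.mod_eq_of_lt (by omega), Nat.mod_eq_of_lt hq1]
          exact hmn
    · intro h i hi
      simp only [ite_eq_right_iff]
      intro hlt
      exact absurd (h (i + 1)) (by omega)

lemma mod_le_of_digF_le (q m n : ℕ) (hq : 2 ≤ q) (h : ∀ i, digF q m i ≤ digF q n i) :
    ∀ i, m % q ^ i ≤ n % q ^ i := by
  intro i
  induction i with
  | zero => simp [Nat.mod_one]
  | succ i ih =>
    rw [mod_pow_succ_eq, mod_pow_succ_eq]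
    exact Nat.add_le_add ih (Nat.mul_le_mul_left _ (h i))

lemma digF_le_of_mod_le (q m n : ℕ) (hq : 2 ≤ q) (h : ∀ i, m % q ^ i ≤ n % q ^ i) :
    ∀ i, digF q m i ≤ digF q n i := by
  intro i
  by_contra hc
  push_neg at hc
  have h1 := mod_pow_succ_eq q m i
  have h2 := mod_pow_succ_eq q n i
  have h3 := h (i + 1)
  have h4 : n % q ^ i < q ^ i := Nat.mod_lt _ (pow_pos (by omega) _)
  have h5 : q ^ i * digF q n i + q ^ i ≤ q ^ i * digF q m i := by
    have h7 := Nat.mul_le_mul_left (q ^ i) (show digF q n i + 1 ≤ digF q m i from hc)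
    rwa [Nat.mul_add, Nat.mul_one] at h7
  have hcon : n % q ^ (i + 1) < m % q ^ (i + 1) := by
    calc n % q ^ (i + 1) = n % q ^ i + q ^ i * digF q n i := h2
    _ < q ^ i + q ^ i * digF q n i := by omega
    _ ≤ m % q ^ i + q ^ i * digF q m i :=
      le_trans (by omega : q ^ i + q ^ i * digF q n i ≤ q ^ i * digF q m i) (Nat.le_add_left _ _)
    _ = m % q ^ (i + 1) := h1.symm
  omega

lemma le_of_mod_le (q m n : ℕ) (hq : 2 ≤ q) (h : ∀ i, m % q ^ i ≤ n % q ^ i) : m ≤ n := by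
  have hm : m < q ^ m :=
    lt_of_lt_of_le (Nat.lt_two_pow_self : m < 2 ^ m) (Nat.pow_le_pow_left hq m)
  have := h m
  rw [Nat.mod_eq_of_lt hm] at this
  exact le_trans this (Nat.mod_le _ _)

open IsLocalRing in
/-- For all `m, n ≥ 0`: `F m (u n) ∉ 𝔪` if and only if for every index `i`, the digit
factor `F m_i (u n_i)` is not in `𝔪`, where `m_i, n_i` are the base-`q` digits of
`m, n`.  In particular, if some digit factor lies in `𝔪` then `F m (u n) ∈ 𝔪`. -/
theorem F_unit_iff_digits
    (V : Type*) [CommRing V] [IsDomain V] [IsDiscreteValuationRing V]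
    (q : ℕ) (hq : 2 ≤ q)
    (π : V) (hπ : Irreducible π)
    (hmax : IsLocalRing.maximalIdeal V = Ideal.span {π})
    (u : ℕ → V) (hu0 : u 0 = 0)
    (hurep : ∀ a : V, ∃! i : ℕ, i < q ∧ a - u i ∈ IsLocalRing.maximalIdeal V)
    (hudig : ∀ n : ℕ, u n = ∑ i ∈ Finset.range (Nat.digits q n).length,
        u ((Nat.digits q n).getD i 0) * π ^ i)
    (F : ℕ → V → V) (hF0 : ∀ x : V, F 0 x = 1)
    (hF : ∀ (n : ℕ) (x : V),
        (∏ k ∈ Finset.range n, (u n - u k)) * F n x = ∏ k ∈ Finset.range n, (x - u k))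
    (m n : ℕ) :
    (F m (u n) ∉ IsLocalRing.maximalIdeal V ↔
      ∀ i : ℕ, F ((Nat.digits q m).getD i 0) (u ((Nat.digits q n).getD i 0)) ∉
        IsLocalRing.maximalIdeal V) ∧
    ((∃ i : ℕ, F ((Nat.digits q m).getD i 0) (u ((Nat.digits q n).getD i 0)) ∈
        IsLocalRing.maximalIdeal V) → F m (u n) ∈ IsLocalRing.maximalIdeal V) := by
  classical
  have hπ0 : π ≠ 0 := hπ.ne_zero
  have hprime : Prime π := UniqueFactorizationMonoid.irreducible_iff_prime.mp hπ
  have hmem : ∀ x : V, x ∈ maximalIdeal V ↔ π ∣ x := fun x => by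
    rw [hmax, Ideal.mem_span_singleton]
  have hunit : ∀ x : V, x ∉ maximalIdeal V → IsUnit x := fun x hx =>
    IsLocalRing.notMem_maximalIdeal.mp hx
  have hunit' : ∀ x : V, IsUnit x → x ∉ maximalIdeal V := fun x hx =>
    IsLocalRing.notMem_maximalIdeal.mpr hx
  -- distinct residues
  have hdist : ∀ a b : ℕ, a < q → b < q → u a - u b ∈ maximalIdeal V → a = b := by
    intro a b ha hb hab
    obtain ⟨i, -, huniq⟩ := hurep (u b)
    have h1 : b = i := huniq b ⟨hb, by simp⟩
    have h2 : a = i := huniq a ⟨ha, by simpa [neg_sub] using (maximalIdeal V).neg_mem hab⟩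
    rw [h1, h2]
  -- padded digit expansion
  have hupad : ∀ a L : ℕ, (Nat.digits q a).length ≤ L →
      u a = ∑ i ∈ Finset.range L, u (digF q a i) * π ^ i := by
    intro a L hL
    rw [hudig a]
    have h1 : ∀ i ∈ Finset.range (Nat.digits q a).length,
        u ((Nat.digits q a).getD i 0) * π ^ i = u (digF q a i) * π ^ i := by
      intro i _; rw [getD_digits q hq]
    rw [Finset.sum_congr rfl h1]
    apply Finset.sum_subset (Finset.range_subset_range.mpr hL)
    intro i _ hi
    have hz : digF q a i = 0 := by
      rw [← getD_digits q hq]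
      exact List.getD_eq_default _ _ (by simpa using hi)
    rw [hz, hu0, zero_mul]
  -- difference of values of u
  have hudiff : ∀ a b : ℕ, a ≠ b →
      ∃ w : V, IsUnit w ∧ u a - u b = π ^ ddF q a b * w := by
    intro a b hab
    set d := ddF q a b with hd
    set L := max (max (Nat.digits q a).length (Nat.digits q b).length) (d + 1) with hLdef
    have hLa : (Nat.digits q a).length ≤ L := le_trans (le_max_left _ _) (le_max_left _ _)
    have hLb : (Nat.digits q b).length ≤ L := le_trans (le_max_right _ _) (le_max_left _ _)
    have hLd : d + 1 ≤ L := le_max_right _ _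
    have hsub : u a - u b = ∑ i ∈ Finset.range L, (u (digF q a i) - u (digF q b i)) * π ^ i := by
      rw [hupad a L hLa, hupad b L hLb, ← Finset.sum_sub_distrib]
      exact Finset.sum_congr rfl fun i _ => (sub_mul _ _ _).symm
    have hagree : ∀ i, i < d → digF q a i = digF q b i := by
      intro i hi
      have h1 : a % q ^ (i + 1) = b % q ^ (i + 1) :=
        (mod_eq_iff_le_ddF hq hab _).mpr (by omega)
      have h2 : digF q a i = a % q ^ (i + 1) / q ^ i := by
        rw [digF, ← Nat.mod_mul_right_div_self, ← pow_succ]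
      have h3 : digF q b i = b % q ^ (i + 1) / q ^ i := by
        rw [digF, ← Nat.mod_mul_right_div_self, ← pow_succ]
      rw [h2, h3, h1]
    have hne : digF q a d ≠ digF q b d := by
      intro hcontra
      have h1 : a % q ^ d = b % q ^ d := (mod_eq_iff_le_ddF hq hab _).mpr (le_refl d)
      have h2 : a % q ^ (d + 1) = b % q ^ (d + 1) := by
        rw [mod_pow_succ_eq, mod_pow_succ_eq, h1, hcontra]
      have := (mod_eq_iff_le_ddF hq hab (d + 1)).mp h2
      omega
    have hsplit : u a - u b = π ^ d *
        ∑ j ∈ Finset.range (L - d), (u (digF q a (d + j)) - u (digF q b (d + j))) * π ^ j := by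
      rw [hsub, Finset.range_eq_Ico,
        ← Finset.sum_Ico_consecutive _ (Nat.zero_le d) (by omega : d ≤ L)]
      have hzero : ∑ i ∈ Finset.Ico 0 d, (u (digF q a i) - u (digF q b i)) * π ^ i = 0 :=
        Finset.sum_eq_zero fun i hi => by
          rw [hagree i (Finset.mem_Ico.mp hi).2, sub_self, zero_mul]
      rw [hzero, zero_add, Finset.sum_Ico_eq_sum_range, Finset.mul_sum, Finset.range_eq_Ico]
      exact Finset.sum_congr rfl fun j _ => by rw [pow_add]; ring
    refine ⟨_, ?_, hsplit⟩
    apply hunit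
    intro hwM
    obtain ⟨Lm, hLm⟩ : ∃ Lm, L - d = Lm + 1 := ⟨L - d - 1, by omega⟩
    rw [hLm, Finset.sum_range_succ'] at hwM
    have hrest : (∑ j ∈ Finset.range Lm,
        (u (digF q a (d + (j + 1))) - u (digF q b (d + (j + 1)))) * π ^ (j + 1))
        ∈ maximalIdeal V :=
      Submodule.sum_mem _ fun j _ => (hmem _).mpr
        ⟨(u (digF q a (d + (j + 1))) - u (digF q b (d + (j + 1)))) * π ^ j, by ring⟩
    have hc0 : (u (digF q a (d + 0)) - u (digF q b (d + 0))) * π ^ 0 ∈ maximalIdeal V := by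
      have hf0 := (maximalIdeal V).sub_mem hwM hrest
      simpa [add_sub_cancel_left] using hf0
    simp only [pow_zero, mul_one, Nat.add_zero] at hc0
    exact hne (hdist _ _ (digF_lt q a d hq) (digF_lt q b d hq) hc0)
  -- products
  have hprod : ∀ a m' : ℕ, (∀ k, k < m' → k ≠ a) →
      ∃ w : V, IsUnit w ∧
        ∏ k ∈ Finset.range m', (u a - u k)
          = π ^ (∑ k ∈ Finset.range m', ddF q a k) * w := by
    intro a m' hne
    induction m' with
    | zero => exact ⟨1, isUnit_one, by simp⟩
    | succ m' ih =>
      obtain ⟨w, hwu, hwe⟩ := ih (fun k hk => hne k (by omega))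
      obtain ⟨w', hw'u, hw'e⟩ := hudiff a m' (Ne.symm (hne m' (by omega)))
      refine ⟨w * w', hwu.mul hw'u, ?_⟩
      rw [Finset.prod_range_succ, Finset.sum_range_succ, hwe, hw'e, pow_add]
      ring
  -- F m (u n) ∈ 𝔪 in the case n < m
  have hFzero : n < m → F m (u n) ∈ maximalIdeal V := by
    intro hnm
    have hnum : ∏ k ∈ Finset.range m, (u n - u k) = 0 :=
      Finset.prod_eq_zero (Finset.mem_range.mpr hnm) (sub_self _)
    obtain ⟨w, hwu, hwe⟩ := hprod m m (fun k hk => by omega)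
    have h0 := hF m (u n)
    rw [hwe, hnum] at h0
    have hF0' : F m (u n) = 0 := by
      rcases mul_eq_zero.mp h0 with h | h
      · exact absurd h (mul_ne_zero (pow_ne_zero _ hπ0) hwu.ne_zero)
      · exact h
    rw [hF0']
    exact zero_mem _
  -- characterization of the left-hand side
  have hLHS : F m (u n) ∉ maximalIdeal V ↔ ∀ i, digF q m i ≤ digF q n i := by
    by_cases hmn : m ≤ n
    · obtain ⟨w, hwu, hwe⟩ := hprod m m (fun k hk => by omega)
      obtain ⟨w', hw'u, hw'e⟩ := hprod n m (fun k hk => by omega)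
      set B := ∑ k ∈ Finset.range m, ddF q m k with hB
      set A := ∑ k ∈ Finset.range m, ddF q n k with hA
      have hBA : B ≤ A := (sum_ddF q m n hq hmn).1
      have h0 := hF m (u n)
      rw [hwe, hw'e] at h0
      have h1 : w * F m (u n) = π ^ (A - B) * w' := by
        have h2 : π ^ B * (w * F m (u n)) = π ^ B * (π ^ (A - B) * w') := by
          rw [← mul_assoc, h0, ← mul_assoc, ← pow_add, Nat.add_sub_cancel' hBA]
        exact mul_left_cancel₀ (pow_ne_zero _ hπ0) h2
      have hkey : F m (u n) ∉ maximalIdeal V ↔ A = B := by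
        constructor
        · intro hnm2
          by_contra hne'
          have hlt : B < A := lt_of_le_of_ne hBA (Ne.symm hne')
          apply hnm2
          rw [hmem]
          have hdvd : π ∣ w * F m (u n) := by
            rw [h1]
            exact Dvd.dvd.mul_right (dvd_pow_self π (by omega : A - B ≠ 0)) _
          rcases hprime.dvd_mul.mp hdvd with h | h
          · exact absurd (isUnit_of_dvd_unit h hwu) hπ.not_isUnit
          · exact h
        · intro hAB hmem'
          have h2 : w * F m (u n) = w' := by
            rw [h1, hAB, Nat.sub_self, pow_zero, one_mul]
          have hFu : IsUnit (F m (u n)) :=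
            isUnit_of_mul_isUnit_right (h2 ▸ hw'u)
          exact hunit' _ hFu hmem'
      rw [hkey, (sum_ddF q m n hq hmn).2]
      exact ⟨digF_le_of_mod_le q m n hq, mod_le_of_digF_le q m n hq⟩
    · push_neg at hmn
      constructor
      · intro h
        exact absurd (hFzero hmn) h
      · intro h
        exfalso
        have := le_of_mod_le q m n hq (mod_le_of_digF_le q m n hq h)
        omega
  -- per-digit characterization
  have hdigit : ∀ a b : ℕ, a < q → b < q → (F a (u b) ∉ maximalIdeal V ↔ a ≤ b) := by
    intro a b ha hb
    have hdd0 : ∀ c k : ℕ, c < q → k < q → c ≠ k → ddF q c k = 0 := by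
      intro c k hc hk hck
      by_contra h
      have h1 : c % q ^ 1 = k % q ^ 1 := (mod_eq_iff_le_ddF hq hck 1).mpr (by omega)
      rw [pow_one, Nat.mod_eq_of_lt hc, Nat.mod_eq_of_lt hk] at h1
      exact hck h1
    obtain ⟨w, hwu, hwe⟩ := hprod a a (fun k hk => by omega)
    have hwe' : ∏ k ∈ Finset.range a, (u a - u k) = w := by
      rw [hwe, Finset.sum_eq_zero (fun k hk =>
        hdd0 a k ha (lt_trans (Finset.mem_range.mp hk) ha)
          (by have := Finset.mem_range.mp hk; omega)), pow_zero, one_mul]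
    rcases lt_or_ge b a with hba | hba
    · have hnum : ∏ k ∈ Finset.range a, (u b - u k) = 0 :=
        Finset.prod_eq_zero (Finset.mem_range.mpr hba) (sub_self _)
      have h0 := hF a (u b)
      rw [hwe', hnum] at h0
      have hF0' : F a (u b) = 0 := by
        rcases mul_eq_zero.mp h0 with h | h
        · exact absurd h hwu.ne_zero
        · exact h
      constructor
      · intro h
        exact absurd (hF0' ▸ zero_mem _) h
      · intro h
        omega
    · obtain ⟨w', hw'u, hw'e⟩ := hprod b a (fun k hk => by omega)
      have hw'e2 : ∏ k ∈ Finset.range a, (u b - u k) = w' := by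
        rw [hw'e, Finset.sum_eq_zero (fun k hk =>
          hdd0 b k hb (lt_of_lt_of_le (Finset.mem_range.mp hk) (le_trans hba (le_of_lt hb)))
            (by have := Finset.mem_range.mp hk; omega)), pow_zero, one_mul]
      have h0 := hF a (u b)
      rw [hwe', hw'e2] at h0
      have hFu : IsUnit (F a (u b)) := isUnit_of_mul_isUnit_right (h0 ▸ hw'u)
      exact ⟨fun _ => hba, fun _ => hunit' _ hFu⟩
  -- assembly
  have hmain : F m (u n) ∉ maximalIdeal V ↔
      ∀ i : ℕ, F ((Nat.digits q m).getD i 0) (u ((Nat.digits q n).getD i 0)) ∉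
        maximalIdeal V := by
    simp only [getD_digits q hq]
    rw [hLHS]
    exact forall_congr' fun i =>
      (hdigit _ _ (digF_lt q m i hq) (digF_lt q n i hq)).symm
  refine ⟨hmain, fun h => ?_⟩
  obtain ⟨i, hi⟩ := h
  by_contra hFM
  exact hmain.mp hFM i hi
end
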